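/- arXiv:1907.04088 — 7 statements merged into one kernel-verified Lean document; each statement's English description precedes it below -/
import Mathlib

section
/- Let C be a nonempty finite multiset of points on a spider and let D = max_{u,v ∈ C} d(u,v) be its diameter. Then there exist u, v ∈ C with d(u,v) = D and a point p of the spider such that d(u,p) = d(v,p) = D/2 and d(w,p) ≤ D/2 for every w ∈ C. -/
/-- The distance function on a spider with legs indexed by `Λ`. -/
noncomputable def spiderDist {Λ : Type*} [DecidableEq Λ] (P Q : Λ × ℝ) : ℝ :=
  if P.1 = Q.1 then |P.2 - Q.2| else P.2 + Q.2

/-- Midpoint bound when the two diameter points lie on the same leg. -/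
lemma spider_bound_same {Λ : Type*} [DecidableEq Λ] (l : Λ) (x y : ℝ)
    (hx : 0 ≤ x) (hy : 0 ≤ y) (W : Λ × ℝ) (hW : 0 ≤ W.2)
    (hWA : spiderDist W (l, x) ≤ |x - y|) (hWB : spiderDist W (l, y) ≤ |x - y|) :
    spiderDist W (l, (x + y) / 2) ≤ |x - y| / 2 := by
  unfold spiderDist at *
  by_cases h : W.1 = l <;> simp only [h, if_true, if_false] at * <;>
  · rcases abs_cases (x - y) with ⟨e1, s1⟩ | ⟨e1, s1⟩ <;>
    rcases abs_cases (W.2 - x) with ⟨e2, s2⟩ | ⟨e2, s2⟩ <;>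
    rcases abs_cases (W.2 - y) with ⟨e3, s3⟩ | ⟨e3, s3⟩ <;>
    rcases abs_cases (W.2 - (x + y) / 2) with ⟨e4, s4⟩ | ⟨e4, s4⟩ <;>
    linarith

/-- Midpoint bound when the two diameter points lie on different legs, `y ≤ x`. -/
lemma spider_bound_diff {Λ : Type*} [DecidableEq Λ] (l m : Λ) (hlm : l ≠ m) (x y : ℝ)
    (hx : 0 ≤ x) (hy : 0 ≤ y) (hyx : y ≤ x) (W : Λ × ℝ) (hW : 0 ≤ W.2)
    (hWA : spiderDist W (l, x) ≤ x + y) (hWB : spiderDist W (m, y) ≤ x + y) :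
    spiderDist W (l, (x - y) / 2) ≤ (x + y) / 2 := by
  unfold spiderDist at *
  by_cases h1 : W.1 = l <;> by_cases h2 : W.1 = m <;>
    simp only [h1, h2, hlm, Ne.symm hlm, if_true, if_false] at * <;>
  first
  | exact absurd (h1.symm.trans h2) hlm
  | (rcases abs_cases (W.2 - x) with ⟨e2, s2⟩ | ⟨e2, s2⟩ <;>
     rcases abs_cases (W.2 - y) with ⟨e3, s3⟩ | ⟨e3, s3⟩ <;>
     rcases abs_cases (W.2 - (x - y) / 2) with ⟨e4, s4⟩ | ⟨e4, s4⟩ <;>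
     linarith)

/-- For a nonempty finite multiset of points `v 0, …, v (k−1)` on a spider with diameter
`D`, there are two points `v a`, `v b` realizing the diameter and a point `p` of the spider
at distance `D/2` from both, such that every point of the multiset is within `D/2` of `p`. -/
theorem spider_diameter_midpoint {Λ : Type*} [DecidableEq Λ] [Nonempty Λ] [Finite Λ]
    (k : ℕ) (hk : 0 < k) (v : Fin k → Λ × ℝ) (hv : ∀ i, 0 ≤ (v i).2) :
    ∃ a b : Fin k,
      (∀ i j : Fin k, spiderDist (v i) (v j) ≤ spiderDist (v a) (v b)) ∧
      ∃ p : Λ × ℝ, 0 ≤ p.2 ∧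
        spiderDist (v a) p = spiderDist (v a) (v b) / 2 ∧
        spiderDist (v b) p = spiderDist (v a) (v b) / 2 ∧
        ∀ i : Fin k, spiderDist (v i) p ≤ spiderDist (v a) (v b) / 2 := by
  haveI : Nonempty (Fin k) := Fin.pos_iff_nonempty.mp hk
  obtain ⟨⟨a, b⟩, hab⟩ :=
    Finite.exists_max (fun q : Fin k × Fin k => spiderDist (v q.1) (v q.2))
  have hmax : ∀ i j : Fin k, spiderDist (v i) (v j) ≤ spiderDist (v a) (v b) :=
    fun i j => hab (i, j)
  refine ⟨a, b, hmax, ?_⟩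
  have hva := hv a
  have hvb := hv b
  by_cases hlm : (v a).1 = (v b).1
  · -- diameter points on the same leg
    have hD : spiderDist (v a) (v b) = |(v a).2 - (v b).2| := by
      unfold spiderDist; rw [if_pos hlm]
    have hB : ((v a).1, (v b).2) = v b := by rw [hlm]
    refine ⟨((v a).1, ((v a).2 + (v b).2) / 2), by dsimp; linarith, ?_, ?_, ?_⟩
    · rw [hD]; unfold spiderDist
      rw [if_pos rfl]; dsimp only
      rw [show (v a).2 - ((v a).2 + (v b).2) / 2
            = ((v a).2 - (v b).2) / 2 by ring, abs_div, abs_two]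
    · rw [hD]; unfold spiderDist
      rw [if_pos hlm.symm]; dsimp only
      rw [show (v b).2 - ((v a).2 + (v b).2) / 2
            = ((v b).2 - (v a).2) / 2 by ring, abs_div, abs_two, abs_sub_comm]
    · intro i
      rw [hD]
      refine spider_bound_same (v a).1 (v a).2 (v b).2 hva hvb (v i) (hv i) ?_ ?_
      · rw [← hD]; exact hmax i a
      · rw [hB, ← hD]; exact hmax i b
  · -- diameter points on different legs
    have hD : spiderDist (v a) (v b) = (v a).2 + (v b).2 := by
      unfold spiderDist; rw [if_neg hlm]
    rcases le_total (v b).2 (v a).2 with hxy | hxy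
    · refine ⟨((v a).1, ((v a).2 - (v b).2) / 2), by dsimp; linarith, ?_, ?_, ?_⟩
      · rw [hD]; unfold spiderDist
        rw [if_pos rfl]; dsimp only
        rw [show (v a).2 - ((v a).2 - (v b).2) / 2
              = ((v a).2 + (v b).2) / 2 by ring,
           abs_of_nonneg (by linarith)]
      · rw [hD]; unfold spiderDist
        rw [if_neg (Ne.symm hlm)]; dsimp only; ring
      · intro i
        rw [hD]
        refine spider_bound_diff (v a).1 (v b).1 hlm (v a).2 (v b).2 hva hvb hxy
          (v i) (hv i) ?_ ?_
        · rw [← hD]; exact hmax i a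
        · rw [← hD]; exact hmax i b
    · refine ⟨((v b).1, ((v b).2 - (v a).2) / 2), by dsimp; linarith, ?_, ?_, ?_⟩
      · rw [hD]; unfold spiderDist
        rw [if_neg hlm]; dsimp only; ring
      · rw [hD]; unfold spiderDist
        rw [if_pos rfl]; dsimp only
        rw [show (v b).2 - ((v b).2 - (v a).2) / 2
              = ((v b).2 + (v a).2) / 2 by ring,
           abs_of_nonneg (by linarith)]
        ring
      · intro i
        rw [hD, show ((v a).2 + (v b).2) / 2 = ((v b).2 + (v a).2) / 2 by ring]
        refine spider_bound_diff (v b).1 (v a).1 (Ne.symm hlm) (v b).2 (v a).2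
          hvb hva hxy (v i) (hv i) ?_ ?_
        · have : (v b).2 + (v a).2 = spiderDist (v a) (v b) := by rw [hD]; ring
          rw [this]; exact hmax i b
        · have : (v b).2 + (v a).2 = spiderDist (v a) (v b) := by rw [hD]; ring
          rw [this]; exact hmax i a
end

section
/- Let U be a finite multiset of n users on a spider, let r be a positive integer with r ≤ n, and let F be any set of points of the spider that contains, for every pair of users u, v ∈ U, a point p with d(u,p) = d(v,p) = d(u,v)/2. Then the optimal r-gathering cost with users U and facilities F equals one half of the optimal r-gather clustering value of U. -/
noncomputable local instance : DecidableEq ℝ := Classical.decEq ℝ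

/-- `C` is an `r`-gather clustering of the `n` users. -/
def IsClustering (n r : ℕ) (C : Fin n → Fin n) : Prop :=
  ∀ i : Fin n, r ≤ (Finset.univ.filter fun j => C j = C i).card

/-- The maximum diameter of the clusters of the clustering `C` of the users `u`. -/
noncomputable def maxDiam {Λ : Type*} [DecidableEq Λ] {n : ℕ}
    (u : Fin n → Λ × ℝ) (C : Fin n → Fin n) : ℝ :=
  sSup {d : ℝ | ∃ i j : Fin n, C i = C j ∧ d = spiderDist (u i) (u j)}

lemma spiderDist_comm {Λ : Type*} [DecidableEq Λ] (P Q : Λ × ℝ) :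
    spiderDist P Q = spiderDist Q P := by
  unfold spiderDist
  rcases eq_or_ne P.1 Q.1 with h | h
  · rw [if_pos h, if_pos h.symm, abs_sub_comm]
  · rw [if_neg h, if_neg h.symm, add_comm]

lemma spiderDist_nonneg {Λ : Type*} [DecidableEq Λ] {P Q : Λ × ℝ}
    (hP : 0 ≤ P.2) (hQ : 0 ≤ Q.2) : 0 ≤ spiderDist P Q := by
  unfold spiderDist
  split_ifs
  · exact abs_nonneg _
  · linarith

lemma spiderDist_triangle {Λ : Type*} [DecidableEq Λ] (P Q R : Λ × ℝ)
    (hP : 0 ≤ P.2) (hQ : 0 ≤ Q.2) (hR : 0 ≤ R.2) :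
    spiderDist P R ≤ spiderDist P Q + spiderDist Q R := by
  obtain ⟨a, x⟩ := P; obtain ⟨b, y⟩ := Q; obtain ⟨c, z⟩ := R
  simp only [spiderDist] at *
  split_ifs <;>
    first
    | (exfalso; subst_vars; simp_all; done)
    | (rcases abs_cases (x - z) with ⟨e1, f1⟩ | ⟨e1, f1⟩ <;>
       rcases abs_cases (x - y) with ⟨e2, f2⟩ | ⟨e2, f2⟩ <;>
       rcases abs_cases (y - z) with ⟨e3, f3⟩ | ⟨e3, f3⟩ <;>
       linarith)

set_option maxHeartbeats 1600000 in
lemma spider_four_point {Λ : Type*} [DecidableEq Λ] (P Q X Y : Λ × ℝ)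
    (hP : 0 ≤ P.2) (hQ : 0 ≤ Q.2) (hX : 0 ≤ X.2) (hY : 0 ≤ Y.2) :
    spiderDist P Q + spiderDist X Y ≤
      max (spiderDist P X + spiderDist Q Y) (spiderDist P Y + spiderDist Q X) := by
  obtain ⟨a, x⟩ := P; obtain ⟨b, y⟩ := Q; obtain ⟨c, z⟩ := X; obtain ⟨e, w⟩ := Y
  simp only [spiderDist] at *
  rw [le_max_iff]
  split_ifs <;>
    first
    | (exfalso; subst_vars; simp_all; done)
    | (rcases abs_cases (x - y) with ⟨e1, f1⟩ | ⟨e1, f1⟩ <;>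
       rcases abs_cases (z - w) with ⟨e2, f2⟩ | ⟨e2, f2⟩ <;>
       rcases abs_cases (x - z) with ⟨e3, f3⟩ | ⟨e3, f3⟩ <;>
       rcases abs_cases (y - w) with ⟨e4, f4⟩ | ⟨e4, f4⟩ <;>
       first
       | (left; linarith [le_abs_self (x-w), neg_abs_le (x-w), le_abs_self (y-z), neg_abs_le (y-z)])
       | (right; linarith [le_abs_self (x-w), neg_abs_le (x-w), le_abs_self (y-z), neg_abs_le (y-z)]))

/-- If the facility set `F` contains, for every pair of users, a point equidistant from
both at half their distance, then the optimal min-max `r`-gathering cost (users `u`,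
facilities `F`) equals one half of the optimal `r`-gather clustering value of `u`.
An `r`-gathering is encoded by the assignment `g` sending each user to its (opened)
facility, every used facility serving at least `r` users; its cost is the supremum of
the user–facility distances. -/
theorem gathering_eq_half_clustering
    {Λ : Type*} [DecidableEq Λ] [Nonempty Λ] [Finite Λ]
    (n r : ℕ) (hr : 0 < r) (hrn : r ≤ n)
    (u : Fin n → Λ × ℝ) (hpos : ∀ i, 0 ≤ (u i).2)
    (F : Set (Λ × ℝ)) (hF : ∀ f ∈ F, 0 ≤ f.2)
    (hmid : ∀ i j : Fin n, ∃ p ∈ F,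
      spiderDist (u i) p = spiderDist (u i) (u j) / 2 ∧
      spiderDist (u j) p = spiderDist (u i) (u j) / 2) :
    sInf {c : ℝ | ∃ g : Fin n → Λ × ℝ, (∀ i, g i ∈ F) ∧
        (∀ i : Fin n, r ≤ (Finset.univ.filter fun j => g j = g i).card) ∧
        c = sSup {d : ℝ | ∃ i : Fin n, d = spiderDist (u i) (g i)}} =
      sInf {d : ℝ | ∃ C : Fin n → Fin n, IsClustering n r C ∧ d = maxDiam u C} / 2 := by
  classical
  have hn : 0 < n := lt_of_lt_of_le hr hrn
  have i0 : Fin n := ⟨0, hn⟩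
  set A := {c : ℝ | ∃ g : Fin n → Λ × ℝ, (∀ i, g i ∈ F) ∧
      (∀ i : Fin n, r ≤ (Finset.univ.filter fun j => g j = g i).card) ∧
      c = sSup {d : ℝ | ∃ i : Fin n, d = spiderDist (u i) (g i)}} with hA
  set B := {d : ℝ | ∃ C : Fin n → Fin n, IsClustering n r C ∧ d = maxDiam u C} with hB
  -- boundedness of inner sup sets
  have hbddS : ∀ g : Fin n → Λ × ℝ,
      BddAbove {d : ℝ | ∃ i : Fin n, d = spiderDist (u i) (g i)} := by
    intro g
    have hsub : {d : ℝ | ∃ i : Fin n, d = spiderDist (u i) (g i)} ⊆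
        Set.range (fun i : Fin n => spiderDist (u i) (g i)) := by
      rintro d ⟨i, rfl⟩; exact ⟨i, rfl⟩
    exact ((Set.finite_range _).subset hsub).bddAbove
  have hbddD : ∀ C : Fin n → Fin n,
      BddAbove {d : ℝ | ∃ i j : Fin n, C i = C j ∧ d = spiderDist (u i) (u j)} := by
    intro C
    have hsub : {d : ℝ | ∃ i j : Fin n, C i = C j ∧ d = spiderDist (u i) (u j)} ⊆
        Set.range (fun p : Fin n × Fin n => spiderDist (u p.1) (u p.2)) := by
      rintro d ⟨i, j, -, rfl⟩; exact ⟨(i, j), rfl⟩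
    exact ((Set.finite_range _).subset hsub).bddAbove
  -- direction: from a gathering, build a clustering of diameter ≤ 2 * cost
  have dir2 : ∀ a ∈ A, ∃ b ∈ B, b ≤ 2 * a := by
    rintro a ⟨g, hgF, hgcard, rfl⟩
    set C : Fin n → Fin n := fun i =>
      (Finset.univ.filter fun j => g j = g i).min' ⟨i, by simp⟩ with hC
    have hCmem : ∀ i, C i ∈ Finset.univ.filter fun j => g j = g i := fun i =>
      Finset.min'_mem _ _
    have hgC : ∀ i, g (C i) = g i := fun i => (Finset.mem_filter.1 (hCmem i)).2
    have key : ∀ i j, C i = C j ↔ g i = g j := by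
      intro i j
      constructor
      · intro h; rw [← hgC i, h, hgC j]
      · intro h
        have h1 : C j ∈ Finset.univ.filter fun k => g k = g i :=
          Finset.mem_filter.2 ⟨Finset.mem_univ _, by rw [hgC j, ← h]⟩
        have h2 : C i ∈ Finset.univ.filter fun k => g k = g j :=
          Finset.mem_filter.2 ⟨Finset.mem_univ _, by rw [hgC i, h]⟩
        exact le_antisymm (Finset.min'_le _ _ h1) (Finset.min'_le _ _ h2)
    have hclus : IsClustering n r C := by
      intro i
      have heq : (Finset.univ.filter fun j => C j = C i)
          = (Finset.univ.filter fun j => g j = g i) := by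
        ext k
        simp only [Finset.mem_filter, Finset.mem_univ, true_and]
        exact key k i
      rw [heq]; exact hgcard i
    refine ⟨maxDiam u C, ?_, ?_⟩
    · rw [hB]; exact ⟨C, hclus, rfl⟩
    · unfold maxDiam
      refine csSup_le ⟨spiderDist (u i0) (u i0), i0, i0, rfl, rfl⟩ ?_
      rintro d ⟨i, j, hij, rfl⟩
      have h1 : spiderDist (u i) (g i) ≤
          sSup {d : ℝ | ∃ i : Fin n, d = spiderDist (u i) (g i)} :=
        le_csSup (hbddS g) ⟨i, rfl⟩
      have h2 : spiderDist (u j) (g j) ≤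
          sSup {d : ℝ | ∃ i : Fin n, d = spiderDist (u i) (g i)} :=
        le_csSup (hbddS g) ⟨j, rfl⟩
      have hgij : g i = g j := (key i j).1 hij
      have htri : spiderDist (u i) (u j) ≤
          spiderDist (u i) (g i) + spiderDist (g i) (u j) :=
        spiderDist_triangle _ _ _ (hpos i) (hF _ (hgF i)) (hpos j)
      have heq2 : spiderDist (g i) (u j) = spiderDist (u j) (g j) := by
        rw [hgij, spiderDist_comm]
      linarith
  -- direction: from a clustering, build a gathering of cost ≤ diameter / 2
  have dir1 : ∀ b ∈ B, ∃ a ∈ A, a ≤ b / 2 := by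
    rintro b ⟨C, hclus, rfl⟩
    have hpairex : ∀ k : Fin n, ∃ p q : Fin n, (∃ m, C m = k) →
        (C p = k ∧ C q = k ∧ ∀ x y : Fin n, C x = k → C y = k →
          spiderDist (u x) (u y) ≤ spiderDist (u p) (u q)) := by
      intro k
      by_cases hk : ∃ m, C m = k
      · obtain ⟨m, hm⟩ := hk
        have hne : ((Finset.univ.filter fun i => C i = k) ×ˢ
            (Finset.univ.filter fun i => C i = k)).Nonempty :=
          ⟨(m, m), by simp [hm]⟩
        obtain ⟨pq, hpqmem, hpqmax⟩ := Finset.exists_max_image _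
          (fun pq : Fin n × Fin n => spiderDist (u pq.1) (u pq.2)) hne
        rw [Finset.mem_product] at hpqmem
        refine ⟨pq.1, pq.2, fun _ => ⟨?_, ?_, ?_⟩⟩
        · exact (Finset.mem_filter.1 hpqmem.1).2
        · exact (Finset.mem_filter.1 hpqmem.2).2
        · intro x y hx hy
          exact hpqmax (x, y) (by simp [hx, hy])
      · exact ⟨i0, i0, fun hm => absurd hm hk⟩
    choose p q hpq using hpairex
    choose mid hmidF hmid1 hmid2 using hmid
    set g : Fin n → Λ × ℝ := fun i => mid (p (C i)) (q (C i)) with hg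
    have hgF : ∀ i, g i ∈ F := fun i => hmidF _ _
    have hcard : ∀ i : Fin n, r ≤ (Finset.univ.filter fun j => g j = g i).card := by
      intro i
      have hsub : (Finset.univ.filter fun j => C j = C i) ⊆
          (Finset.univ.filter fun j => g j = g i) := by
        intro k hk
        rw [Finset.mem_filter] at hk ⊢
        exact ⟨hk.1, by rw [hg]; simp only; rw [hk.2]⟩
      exact le_trans (hclus i) (Finset.card_le_card hsub)
    refine ⟨sSup {d : ℝ | ∃ i : Fin n, d = spiderDist (u i) (g i)}, ?_, ?_⟩
    · rw [hA]; exact ⟨g, hgF, hcard, rfl⟩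
    · refine csSup_le ⟨spiderDist (u i0) (g i0), i0, rfl⟩ ?_
      rintro d ⟨i, rfl⟩
      obtain ⟨hp, hq, hmax⟩ := hpq (C i) ⟨i, rfl⟩
      have hD : spiderDist (u (p (C i))) (u (q (C i))) ≤ maxDiam u C := by
        unfold maxDiam
        exact le_csSup (hbddD C) ⟨p (C i), q (C i), hp.trans hq.symm, rfl⟩
      have h4 := spider_four_point (u i) (mid (p (C i)) (q (C i)))
        (u (p (C i))) (u (q (C i))) (hpos i) (hF _ (hmidF _ _)) (hpos _) (hpos _)
      have hm1 : spiderDist (mid (p (C i)) (q (C i))) (u (q (C i)))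
          = spiderDist (u (p (C i))) (u (q (C i))) / 2 := by
        rw [spiderDist_comm]; exact hmid2 _ _
      have hm2 : spiderDist (mid (p (C i)) (q (C i))) (u (p (C i)))
          = spiderDist (u (p (C i))) (u (q (C i))) / 2 := by
        rw [spiderDist_comm]; exact hmid1 _ _
      have hiP : spiderDist (u i) (u (p (C i))) ≤
          spiderDist (u (p (C i))) (u (q (C i))) := hmax i (p (C i)) rfl hp
      have hiQ : spiderDist (u i) (u (q (C i))) ≤
          spiderDist (u (p (C i))) (u (q (C i))) := hmax i (q (C i)) rfl hq
      have hmax' : max (spiderDist (u i) (u (p (C i))) +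
            spiderDist (mid (p (C i)) (q (C i))) (u (q (C i))))
          (spiderDist (u i) (u (q (C i))) +
            spiderDist (mid (p (C i)) (q (C i))) (u (p (C i))))
          ≤ spiderDist (u (p (C i))) (u (q (C i)))
            + spiderDist (u (p (C i))) (u (q (C i))) / 2 :=
        max_le (by rw [hm1]; linarith) (by rw [hm2]; linarith)
      have hgi : spiderDist (u i) (g i)
          = spiderDist (u i) (mid (p (C i)) (q (C i))) := rfl
      rw [hgi]
      linarith
  -- nonemptiness and lower bounds
  have hBne : B.Nonempty := by
    refine ⟨maxDiam u (fun _ => i0), ?_⟩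
    rw [hB]
    refine ⟨fun _ => i0, ?_, rfl⟩
    intro i
    have : (Finset.univ.filter fun j : Fin n => (fun _ : Fin n => i0) j
        = (fun _ : Fin n => i0) i) = Finset.univ := by
      ext k; simp
    rw [this]
    simpa using hrn
  have hAne : A.Nonempty := by
    obtain ⟨b, hb⟩ := hBne
    obtain ⟨a, ha, -⟩ := dir1 b hb
    exact ⟨a, ha⟩
  have hA0 : ∀ a ∈ A, 0 ≤ a := by
    rintro a ⟨g, hgF, -, rfl⟩
    exact le_trans (spiderDist_nonneg (hpos i0) (hF _ (hgF i0)))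
      (le_csSup (hbddS g) ⟨i0, rfl⟩)
  have hB0 : ∀ b ∈ B, 0 ≤ b := by
    rintro b ⟨C, -, rfl⟩
    unfold maxDiam
    exact le_trans (spiderDist_nonneg (hpos i0) (hpos i0))
      (le_csSup (hbddD C) ⟨i0, i0, rfl, rfl⟩)
  have hAbd : BddBelow A := ⟨0, hA0⟩
  have hBbd : BddBelow B := ⟨0, hB0⟩
  have h1 : sInf B / 2 ≤ sInf A := by
    apply le_csInf hAne
    intro a ha
    obtain ⟨b, hb, hba⟩ := dir2 a ha
    have := csInf_le hBbd hb
    linarith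
  have h2 : sInf A ≤ sInf B / 2 := by
    have h2' : 2 * sInf A ≤ sInf B := by
      apply le_csInf hBne
      intro b hb
      obtain ⟨a, ha, hab⟩ := dir1 b hb
      have := csInf_le hAbd ha
      linarith
    linarith
  linarith
end

section
/- In every feasible solution of the constructed instance I′, no cluster contains users from two different long legs. -/
/-- An instance of the arrears problem: payment duties
`S i = {(a i 0, p i 0), …, (a i (sz i), p i (sz i))}` (so `|S i| = sz i + 1`),
with strictly increasing payment dates and amounts, and budget constraints
`(b j, q j)`, strictly increasing, all positive, with the last budget date
at least every payment date. -/
structure ArrearsInstance where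
  n : ℕ
  m : ℕ
  npos : 0 < n
  mpos : 0 < m
  sz : Fin n → ℕ
  a : (i : Fin n) → Fin (sz i + 1) → ℕ
  p : (i : Fin n) → Fin (sz i + 1) → ℕ
  amono : ∀ i, StrictMono (a i)
  pmono : ∀ i, StrictMono (p i)
  apos : ∀ i k, 0 < a i k
  ppos : ∀ i k, 0 < p i k
  b : Fin m → ℕ
  q : Fin m → ℕ
  bmono : StrictMono b
  qmono : StrictMono q
  bpos : ∀ j, 0 < b j
  qpos : ∀ j, 0 < q j
  hba : ∀ i k, a i k ≤ Finset.univ.sup b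

namespace ArrearsInstance

variable (I : ArrearsInstance)

/-- `L = max(max_i a_{i,|S_i|}, b_m) + 1`. -/
def L : ℕ := ((Finset.univ.sup fun i => I.a i (Fin.last (I.sz i))) ⊔ Finset.univ.sup I.b) + 1

/-- `r = max(max_i p_{i,|S_i|}, q_m) + 1`. -/
def r : ℕ := ((Finset.univ.sup fun i => I.p i (Fin.last (I.sz i))) ⊔ Finset.univ.sup I.q) + 1

/-- `q_{j-1}`, with `q_0 = 0`. -/
def qprev (j : Fin I.m) : ℕ :=
  if (j : ℕ) = 0 then 0 else I.q ⟨(j : ℕ) - 1, lt_of_le_of_lt (Nat.sub_le _ _) j.isLt⟩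

/-- `b_{j-1}`, with `b_0 = 0`. -/
def bprev (j : Fin I.m) : ℕ :=
  if (j : ℕ) = 0 then 0 else I.b ⟨(j : ℕ) - 1, lt_of_le_of_lt (Nat.sub_le _ _) j.isLt⟩

/-- The number `q j − q (j−1)` of short legs of length `b (j−1) + 1`. -/
def qdiff (j : Fin I.m) : ℕ := I.q j - I.qprev j

/-- The legs of the spider of the constructed instance `I′`: one long leg per payment
duty, `q j − q (j−1)` short legs of length `b (j−1) + 1` for every `j`, and `r` short
legs of length `L`. -/
def Leg : Type := Fin I.n ⊕ ((Σ j : Fin I.m, Fin (I.qdiff j)) ⊕ Fin I.r)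

instance : DecidableEq I.Leg :=
  inferInstanceAs (DecidableEq (Fin I.n ⊕ ((Σ j : Fin I.m, Fin (I.qdiff j)) ⊕ Fin I.r)))

/-- The coordinate `4L − a_{i,|S_i|} + 1` of the farthest users on long leg `i`. -/
def endCoord (i : Fin I.n) : ℝ := 4 * I.L - I.a i (Fin.last (I.sz i)) + 1

/-- The coordinate `2L − a_{i,|S_i|}` of the innermost users on long leg `i`. -/
def lastCoord (i : Fin I.n) : ℝ := 2 * I.L - I.a i (Fin.last (I.sz i))

/-- The farthest user on long leg `i`. -/
def endPt (i : Fin I.n) : I.Leg × ℝ := (Sum.inl i, I.endCoord i)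

/-- The users on long leg `i`: `r` users at `4L − a_{i,|S_i|} + 1`, then
`p_{i,k+1} − p_{i,k}` users at `2L − a_{i,k}` for `k = 1, …, |S_i| − 1`, and
`r − p_{i,|S_i|}` users at `2L − a_{i,|S_i|}`. -/
def longUsers (i : Fin I.n) : Multiset (I.Leg × ℝ) :=
  Multiset.replicate I.r (I.endPt i)
  + (Finset.univ : Finset (Fin (I.sz i))).val.bind (fun k =>
      Multiset.replicate (I.p i k.succ - I.p i k.castSucc)
        ((Sum.inl i, (2 * I.L - I.a i k.castSucc : ℝ)) : I.Leg × ℝ))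
  + Multiset.replicate (I.r - I.p i (Fin.last (I.sz i)))
      ((Sum.inl i, I.lastCoord i) : I.Leg × ℝ)

/-- All users of the constructed instance `I′`: the users on the long legs, one user at
the tip of each short leg of length `b (j−1) + 1`, and one user at the tip of each of
the `r` short legs of length `L`. -/
def users : Multiset (I.Leg × ℝ) :=
  (Finset.univ : Finset (Fin I.n)).val.bind I.longUsers
  + (Finset.univ : Finset (Σ j : Fin I.m, Fin (I.qdiff j))).val.map
      (fun s => ((Sum.inr (Sum.inl s), (I.bprev s.1 + 1 : ℝ)) : I.Leg × ℝ))
  + (Finset.univ : Finset (Fin I.r)).val.map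
      (fun t => ((Sum.inr (Sum.inr t), (I.L : ℝ)) : I.Leg × ℝ))

/-- A feasible solution of `I′`: a partition of the users into clusters, each containing
at least `r` users and having diameter at most `2L`. -/
def Feasible (P : Multiset (Multiset (I.Leg × ℝ))) : Prop :=
  P.sum = I.users ∧
  ∀ C ∈ P, I.r ≤ Multiset.card C ∧ ∀ x ∈ C, ∀ y ∈ C, spiderDist x y ≤ 2 * I.L

end ArrearsInstance

lemma ArrearsInstance.a_lt_L (I : ArrearsInstance) (i : Fin I.n) (k : Fin (I.sz i + 1)) :
    I.a i k < I.L := by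
  have h1 : I.a i k ≤ I.a i (Fin.last (I.sz i)) := (I.amono i).monotone (Fin.le_last k)
  have h2 : I.a i (Fin.last (I.sz i)) ≤ Finset.univ.sup fun i => I.a i (Fin.last (I.sz i)) :=
    Finset.le_sup (f := fun i => I.a i (Fin.last (I.sz i))) (Finset.mem_univ i)
  have : I.a i k ≤ (Finset.univ.sup fun i => I.a i (Fin.last (I.sz i))) ⊔ Finset.univ.sup I.b :=
    le_sup_of_le_left (h1.trans h2)
  exact lt_of_le_of_lt this (Nat.lt_succ_self _)

lemma ArrearsInstance.long_coord_lb (I : ArrearsInstance) (x : I.Leg × ℝ)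
    (hx : x ∈ I.users) (i : Fin I.n) (hxi : x.1 = Sum.inl i) :
    (I.L : ℝ) + 1 ≤ x.2 := by
  rcases Multiset.mem_add.1 hx with hx | hx
  · rcases Multiset.mem_add.1 hx with hx | hx
    · rcases Multiset.mem_bind.1 hx with ⟨i', -, hx⟩
      have key : ∀ k : Fin (I.sz i' + 1), (I.L : ℝ) + 1 ≤ 2 * I.L - I.a i' k := by
        intro k
        have := I.a_lt_L i' k
        have : (I.a i' k : ℝ) + 1 ≤ I.L := by exact_mod_cast this
        linarith
      rcases Multiset.mem_add.1 hx with hx | hx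
      · rcases Multiset.mem_add.1 hx with hx | hx
        · have := (Multiset.eq_of_mem_replicate hx)
          rw [this]
          show (I.L : ℝ) + 1 ≤ I.endCoord i'
          unfold ArrearsInstance.endCoord
          have := I.a_lt_L i' (Fin.last (I.sz i'))
          have : (I.a i' (Fin.last (I.sz i')) : ℝ) + 1 ≤ I.L := by exact_mod_cast this
          have hL : (0:ℝ) ≤ I.L := by positivity
          linarith
        · rcases Multiset.mem_bind.1 hx with ⟨k, -, hx⟩
          have := Multiset.eq_of_mem_replicate hx
          rw [this]
          exact key _
      · have := Multiset.eq_of_mem_replicate hx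
        rw [this]
        exact key _
    · rcases Multiset.mem_map.1 hx with ⟨s, -, hs⟩
      rw [← hs] at hxi; simp at hxi
  · rcases Multiset.mem_map.1 hx with ⟨t, -, ht⟩
    rw [← ht] at hxi; simp at hxi

/-- In every feasible solution of the constructed instance `I′`, no cluster contains
users from two different long legs. -/
theorem no_cluster_meets_two_long_legs (I : ArrearsInstance)
    (P : Multiset (Multiset (I.Leg × ℝ))) (hP : I.Feasible P) :
    ∀ C ∈ P, ∀ x ∈ C, ∀ y ∈ C, ∀ i i' : Fin I.n,
      x.1 = Sum.inl i → y.1 = Sum.inl i' → i = i' := by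
  intro C hC x hx y hy i i' hxi hyi
  by_contra hne
  have hxu : x ∈ I.users := by
    rw [← hP.1]
    exact Multiset.mem_join.2 ⟨C, hC, hx⟩
  have hyu : y ∈ I.users := by
    rw [← hP.1]
    exact Multiset.mem_join.2 ⟨C, hC, hy⟩
  have hxL := I.long_coord_lb x hxu i hxi
  have hyL := I.long_coord_lb y hyu i' hyi
  have hdist := (hP.2 C hC).2 x hx y hy
  have hne' : x.1 ≠ y.1 := by
    rw [hxi, hyi]
    exact fun h => hne (Sum.inl_injective h)
  rw [spiderDist, if_neg hne'] at hdist
  have hL : (0:ℝ) ≤ I.L := by positivity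
  linarith
end

section
/- In every feasible solution of the constructed instance I′, every end cluster of a long leg i contains only users lying on leg i. -/
/-- In every feasible solution of the constructed instance `I′`, every end cluster of a
long leg `i` (i.e. every cluster containing a user of leg `i` farthest from the center)
contains only users lying on leg `i`. -/
theorem end_cluster_only_long_leg (I : ArrearsInstance)
    (P : Multiset (Multiset (I.Leg × ℝ))) (hP : I.Feasible P) :
    ∀ C ∈ P, ∀ i : Fin I.n, I.endPt i ∈ C → ∀ x ∈ C, x.1 = Sum.inl i := by
  have ha : ∀ (i : Fin I.n) (k : Fin (I.sz i + 1)), (I.a i k : ℝ) + 1 ≤ I.L := by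
    intro i k
    have h1 : I.a i k ≤ I.a i (Fin.last (I.sz i)) :=
      (I.amono i).monotone (Fin.le_last k)
    have h2 : I.a i (Fin.last (I.sz i)) ≤
        Finset.univ.sup fun i => I.a i (Fin.last (I.sz i)) :=
      Finset.le_sup (f := fun i => I.a i (Fin.last (I.sz i))) (Finset.mem_univ i)
    have : I.a i k + 1 ≤ I.L := by
      unfold ArrearsInstance.L
      omega
    exact_mod_cast this
  have hnonneg : ∀ u ∈ I.users, (0 : ℝ) ≤ u.2 := by
    intro u hu
    unfold ArrearsInstance.users ArrearsInstance.longUsers at hu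
    simp only [Multiset.mem_add, Multiset.mem_bind, Multiset.mem_map,
      Multiset.mem_replicate, Finset.mem_val, Finset.mem_univ, true_and] at hu
    rcases hu with ((⟨i, (⟨_, h⟩ | ⟨k, _, h⟩) | ⟨_, h⟩⟩) | ⟨s, h⟩) | ⟨t, h⟩
    · have := ha i (Fin.last (I.sz i))
      subst h; unfold ArrearsInstance.endPt ArrearsInstance.endCoord
      simp only
      have hL : (0:ℝ) ≤ I.L := Nat.cast_nonneg _
      linarith
    · have := ha i k.castSucc
      subst h
      simp only
      have hL : (0:ℝ) ≤ I.L := Nat.cast_nonneg _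
      linarith
    · have := ha i (Fin.last (I.sz i))
      subst h; unfold ArrearsInstance.lastCoord
      simp only
      have hL : (0:ℝ) ≤ I.L := Nat.cast_nonneg _
      linarith
    · subst h
      simp only
      have : (0:ℝ) ≤ I.bprev s.1 := Nat.cast_nonneg _
      linarith
    · subst h
      simp only
      exact Nat.cast_nonneg _
  intro C hC i hend x hx
  by_contra hne
  have hd := (hP.2 C hC).2 _ hend x hx
  have hCle : C ≤ P.sum := Multiset.le_sum_of_mem hC
  have hxu : x ∈ I.users := by
    rw [← hP.1]; exact Multiset.mem_of_le hCle hx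
  have hx2 : (0:ℝ) ≤ x.2 := hnonneg x hxu
  rw [spiderDist] at hd
  have hfst : (I.endPt i).1 = Sum.inl i := rfl
  rw [hfst, if_neg (fun h => hne h.symm)] at hd
  have hsnd : (I.endPt i).2 = I.endCoord i := rfl
  rw [hsnd] at hd
  unfold ArrearsInstance.endCoord at hd
  have := ha i (Fin.last (I.sz i))
  have hL : (0:ℝ) ≤ I.L := Nat.cast_nonneg _
  linarith
end

section
/- Let n be a positive integer, K a nonnegative real number, and S_1,…,S_n nonnegative real numbers such that Σ_{j=1}^{i} S_j ≤ iK for every i = 1,…,n−1 and Σ_{j=1}^{n} S_j = nK. Then Σ_{i=1}^{n} i·S_i ≥ (n(n+1)/2)·K, and equality holds if and only if S_i = K for every i = 1,…,n. -/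
lemma sum_range_cast (n : ℕ) : ∑ i ∈ Finset.range n, (i : ℝ) = (n : ℝ) * (n - 1) / 2 := by
  induction n with
  | zero => simp
  | succ m ihm => rw [Finset.sum_range_succ, ihm]; push_cast; ring

lemma sum_range_cast' (n : ℕ) : ∑ i ∈ Finset.range n, ((i : ℝ) + 1) = (n : ℝ) * (n + 1) / 2 := by
  induction n with
  | zero => simp
  | succ m ihm => rw [Finset.sum_range_succ, ihm]; push_cast; ring

lemma abel_aux (S : ℕ → ℝ) (n : ℕ) :
    ∑ j ∈ Finset.range n, ((j : ℝ) + 1) * S j =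
      (n : ℝ) * (∑ j ∈ Finset.range n, S j) -
        ∑ i ∈ Finset.range n, ∑ j ∈ Finset.range i, S j := by
  induction n with
  | zero => simp
  | succ n ih =>
    rw [Finset.sum_range_succ, ih, Finset.sum_range_succ (f := fun i => ∑ j ∈ Finset.range i, S j),
      Finset.sum_range_succ (f := S)]
    push_cast
    ring

/-- Summation-by-parts inequality: if the prefix sums `S_1 + ⋯ + S_i` are at most `i·K`
for `i = 1, …, n − 1` and the total sum equals `n·K`, then `∑ i·S_i ≥ (n(n+1)/2)·K`,
with equality iff every `S_i = K`.  (Here `S j` denotes `S_{j+1}`, `j = 0, …, n−1`.) -/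
theorem sum_weighted_ge_of_prefix_le (n : ℕ) (hn : 0 < n) (K : ℝ) (hK : 0 ≤ K)
    (S : ℕ → ℝ) (hS : ∀ j < n, 0 ≤ S j)
    (hpre : ∀ i < n, ∑ j ∈ Finset.range i, S j ≤ (i : ℝ) * K)
    (htot : ∑ j ∈ Finset.range n, S j = (n : ℝ) * K) :
    ((n : ℝ) * (n + 1) / 2) * K ≤ ∑ j ∈ Finset.range n, ((j : ℝ) + 1) * S j ∧
    ((∑ j ∈ Finset.range n, ((j : ℝ) + 1) * S j = ((n : ℝ) * (n + 1) / 2) * K) ↔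
      ∀ j < n, S j = K) := by
  have habel := abel_aux S n
  have hsum_le : ∀ i ∈ Finset.range n, ∑ j ∈ Finset.range i, S j ≤ (i : ℝ) * K := by
    intro i hi
    exact hpre i (Finset.mem_range.mp hi)
  have hT : ∑ i ∈ Finset.range n, ∑ j ∈ Finset.range i, S j
      ≤ ∑ i ∈ Finset.range n, (i : ℝ) * K := Finset.sum_le_sum hsum_le
  have hrangeK : ∑ i ∈ Finset.range n, (i : ℝ) * K = ((n : ℝ) * (n - 1) / 2) * K := by
    rw [← Finset.sum_mul]
    congr 1
    exact sum_range_cast n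
  have key : ((n : ℝ) * (n + 1) / 2) * K ≤ ∑ j ∈ Finset.range n, ((j : ℝ) + 1) * S j := by
    rw [habel, htot]
    have := hT.trans_eq hrangeK
    nlinarith [this]
  refine ⟨key, ?_, ?_⟩
  · intro heq
    -- equality forces each prefix sum to equal i*K
    have hTeq : ∑ i ∈ Finset.range n, ∑ j ∈ Finset.range i, S j
        = ∑ i ∈ Finset.range n, (i : ℝ) * K := by
      rw [habel, htot] at heq
      rw [hrangeK]
      nlinarith [heq]
    have heach : ∀ i ∈ Finset.range n, ∑ j ∈ Finset.range i, S j = (i : ℝ) * K := by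
      intro i hi
      exact (Finset.sum_eq_sum_iff_of_le hsum_le).mp hTeq i hi
    intro j hj
    have h1 : ∑ k ∈ Finset.range (j + 1), S k = ((j : ℝ) + 1) * K := by
      rcases eq_or_lt_of_le (Nat.succ_le_of_lt hj) with h | h
      · subst h; rw [htot]; push_cast; ring
      · have := heach (j + 1) (Finset.mem_range.mpr h)
        rw [this]; push_cast; ring
    have h0 : ∑ k ∈ Finset.range j, S k = (j : ℝ) * K :=
      heach j (Finset.mem_range.mpr hj)
    have := Finset.sum_range_succ S j
    rw [h1, h0] at this
    linarith
  · intro hall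
    have : ∑ j ∈ Finset.range n, ((j : ℝ) + 1) * S j
        = ∑ j ∈ Finset.range n, ((j : ℝ) + 1) * K := by
      apply Finset.sum_congr rfl
      intro j hj
      rw [hall j (Finset.mem_range.mp hj)]
    rw [this, ← Finset.sum_mul, sum_range_cast' n]
end

section
/- For every feasible solution of the constructed arrears instance I′ and for every i = 1,…,n, either X ∩ Y_i = T_i or X ∩ Y_i = T̄_i. -/
/-! Construction of the arrears instance `I′` from a 1-IN-3SAT instance with `n`
variables and `m` clauses, where clause `j` has literals `c j 0, c j 1, c j 2`, a literal
being a pair `(i, pos)` meaning `xᵢ` if `pos = true` and `¬xᵢ` if `pos = false`. -/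

/-- The base `B = 100 n² m²`. -/
def Bval (n m : ℕ) : ℕ := 100 * n ^ 2 * m ^ 2

/-- `N = 3m(m+2) + 1`. -/
def Nval (m : ℕ) : ℕ := 3 * m * (m + 2) + 1

/-- The items: `Sum.inl (i, j, k, pos)` is `u_{i,j,k}` (if `pos = true`) or `ū_{i,j,k}`
(if `pos = false`); `Sum.inr (i, l, pos)` is `w_{i,l}` or `w̄_{i,l}`. -/
abbrev Item (n m : ℕ) :=
  (Fin n × Fin m × Fin 3 × Bool) ⊕ (Fin n × Fin (3 * m * (m + 1) + 1) × Bool)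

/-- The variable index of an item. -/
def itemVar {n m : ℕ} : Item n m → Fin n
  | Sum.inl (i, _, _, _) => i
  | Sum.inr (i, _, _) => i

/-- The polarity of an item (`true` for the `u`/`w` items, `false` for `ū`/`w̄`). -/
def itemPos {n m : ℕ} : Item n m → Bool
  | Sum.inl (_, _, _, pos) => pos
  | Sum.inr (_, _, pos) => pos

/-- First payment amount of `u_{i,j,k}`. -/
def pu (n m : ℕ) (c : Fin m → Fin 3 → Fin n × Bool) (i : Fin n) (j : Fin m) (k : Fin 3) : ℕ :=
  (Bval n m ^ 2 + ((i : ℕ) + 1)) * (Bval n m + 1) * Bval n m +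
    (if c j k = (i, true) then (j : ℕ) + 2 else 0)

/-- First payment amount of `ū_{i,j,k}`. -/
def pub (n m : ℕ) (c : Fin m → Fin 3 → Fin n × Bool) (i : Fin n) (j : Fin m) (k : Fin 3) : ℕ :=
  (Bval n m ^ 2 + ((i : ℕ) + 1)) * Bval n m ^ 2 +
    (if c j k = (i, false) then (j : ℕ) + 2 else 0)

/-- `K_i = Σ_{u ∈ U_i} (p_{u,1} mod B)`. -/
def Kv (n m : ℕ) (c : Fin m → Fin 3 → Fin n × Bool) (i : Fin n) : ℕ :=
  ∑ j : Fin m, ∑ k : Fin 3, pu n m c i j k % Bval n m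

/-- `K̄_i = Σ_{u ∈ Ū_i} (p_{u,1} mod B)`. -/
def Kbv (n m : ℕ) (c : Fin m → Fin 3 → Fin n × Bool) (i : Fin n) : ℕ :=
  ∑ j : Fin m, ∑ k : Fin 3, pub n m c i j k % Bval n m

/-- The first payment amount `p_{y,1}` of each item `y` (the second amount is `2 p_{y,1}`). -/
def p1 (n m : ℕ) (c : Fin m → Fin 3 → Fin n × Bool) : Item n m → ℕ
  | Sum.inl (i, j, k, pos) => if pos then pu n m c i j k else pub n m c i j k
  | Sum.inr (i, l, pos) =>
      if pos then
        if (l : ℕ) + 1 ≤ 3 * m * (m + 1) - Kv n m c i then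
          (Bval n m ^ 2 + ((i : ℕ) + 1)) * (Bval n m + 1) * Bval n m + 1
        else (Bval n m ^ 2 + ((i : ℕ) + 1)) * (Bval n m + 1) * Bval n m
      else
        if (l : ℕ) + 1 ≤ 3 * m * (m + 1) - Kbv n m c i then
          (Bval n m ^ 2 + ((i : ℕ) + 1)) * Bval n m ^ 2 + 1
        else if (l : ℕ) + 1 ≤ 3 * m * (m + 1) then
          (Bval n m ^ 2 + ((i : ℕ) + 1)) * Bval n m ^ 2
        else (Bval n m ^ 2 + ((i : ℕ) + 1)) * (Bval n m + Nval m) * Bval n m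

/-- The first payment date `a_{y,1}`: day `i` for the items of variable `xᵢ`. -/
def a1 {n m : ℕ} (y : Item n m) : ℕ := (itemVar y : ℕ) + 1

/-- The second payment date `a_{y,2}`. -/
def a2 (n m : ℕ) (c : Fin m → Fin 3 → Fin n × Bool) : Item n m → ℕ
  | Sum.inl (i, j, k, pos) => if c j k = (i, pos) then n + 2 + ((j : ℕ) + 1) else n + 1
  | Sum.inr (i, l, pos) =>
      if pos then
        if (l : ℕ) + 1 ≤ 3 * m * (m + 1) - Kv n m c i then n + 2 else n + 1
      else
        if (l : ℕ) + 1 ≤ 3 * m * (m + 1) - Kbv n m c i then n + 2 else n + 1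

/-- `R = N(B+1)(nB² + n(n+1)/2)B + 3m(m+1)n`. -/
def Rval (n m : ℕ) : ℕ :=
  Nval m * (Bval n m + 1) * (n * Bval n m ^ 2 + n * (n + 1) / 2) * Bval n m +
    3 * m * (m + 1) * n

/-- The budget amount `q_i` of the budget constraint on day `i`, for `1 ≤ i ≤ n+m+2`. -/
def qv (n m : ℕ) (i : ℕ) : ℕ :=
  if i < n then Nval m * (Bval n m + 1) * i * Bval n m ^ 3 + (Bval n m ^ 3 - 1)
  else if i = n then Rval n m
  else if i = n + 1 then
    (Nval m * n + 6 * m * n + 2 * n + m * (m + 1)) * Bval n m ^ 4 + (Bval n m ^ 4 - 1)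
  else if i ≤ n + m + 1 then
    (3 * Nval m * n - 2 * (n + m + 2 - i)) * Bval n m ^ 4 + (Bval n m ^ 4 - 1)
  else 3 * Rval n m

/-- A solution of the arrears instance chooses for every item `y` one of its two options
(`z y = true` means the second option `(a_{y,2}, 2 p_{y,1})` is chosen); it is feasible if
every budget constraint is satisfied. -/
def Feasible (n m : ℕ) (c : Fin m → Fin 3 → Fin n × Bool) (z : Item n m → Bool) : Prop :=
  ∀ i : ℕ, 1 ≤ i → i ≤ n + m + 2 →
    (∑ y : Item n m,
      if (if z y then a2 n m c y else a1 y) ≤ i then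
        (if z y then 2 * p1 n m c y else p1 n m c y) else 0) ≤ qv n m i

/-- `X`: the set of items for which the second option is chosen. -/
def Xset (n m : ℕ) (z : Item n m → Bool) : Finset (Item n m) :=
  Finset.univ.filter fun y => z y = true

/-- `T_i = U_i ∪ W_i`: the positive items of variable `xᵢ`. -/
def Tset (n m : ℕ) (i : Fin n) : Finset (Item n m) :=
  Finset.univ.filter fun y => itemVar y = i ∧ itemPos y = true

/-- `T̄_i = Ū_i ∪ W̄_i`: the negative items of variable `xᵢ`. -/
def Tbar (n m : ℕ) (i : Fin n) : Finset (Item n m) :=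
  Finset.univ.filter fun y => itemVar y = i ∧ itemPos y = false

/-- `Y_i = T_i ∪ T̄_i`: all items of variable `xᵢ`. -/
def Yset (n m : ℕ) (i : Fin n) : Finset (Item n m) :=
  Finset.univ.filter fun y => itemVar y = i

/-- `Z_j`: the items whose second payment date is `n + 1 + j`. -/
def Zset (n m : ℕ) (c : Fin m → Fin 3 → Fin n × Bool) (j : ℕ) : Finset (Item n m) :=
  Finset.univ.filter fun y => a2 n m c y = n + 1 + j

/-! Every first payment splits in base `B` as `p_{y,1} = (B² + i)·B·weight y + residue y` with
`residue y < B`, the weight being `B + 1` on `T_i`, `B` on `T̄_i` and `B + N` on the extra item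
`w̄_{i,3m(m+1)+1}`; each `Y_i` has total weight `2N(B+1)` and total residue `6m(m+1)`.
The budgets of days `n` and `n+m+2` force the first payments of the delayed items to add up to
exactly `R`, so comparing base-`B` digits gives `∑ᵢ (B² + i) aᵢ = ∑ᵢ (B² + i) N(B+1)` for the
delayed weights `aᵢ`, while the budgets of days `v < n` give `∑_{i ≤ v} aᵢ ≥ v N(B+1)`. Since
`n² N(B+1) < B²`, an Abel summation turns this into `aᵢ = N(B+1)` for all `i`. Finally
`aᵢ = (B+1)s + Bt + Nε` with `s ≤ N` delayed items of `T_i`, `t` of `T̄_i` and `ε ≤ 1` leaves only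
`s = N, t = 0` or `s = 0, t = N`. -/

open Finset

theorem Nat.eq_and_eq_of_add_mul_eq_add_mul {B a b c d : ℕ} (ha : a < B) (hc : c < B)
    (h : a + B * b = c + B * d) : a = c ∧ b = d := by
  have hB : 0 < B := by omega
  obtain ⟨hd, hc'⟩ := (Nat.div_mod_unique hB).2 ⟨rfl, hc⟩
  obtain ⟨hb, ha'⟩ := (Nat.div_mod_unique hB).2 ⟨h, ha⟩
  exact ⟨ha'.symm.trans hc', hb.symm.trans hd⟩

theorem eq_or_eq_of_mul_add_mul_add_mul_eq {B N s t e : ℕ} (hNB : N < B) (hs : s ≤ N)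
    (he : e ≤ 1) (h : (B + 1) * s + B * t + N * e = N * (B + 1)) :
    (s = N ∧ t = 0) ∨ (s = 0 ∧ t = N) := by
  interval_cases e
  · have := Nat.eq_and_eq_of_add_mul_eq_add_mul (a := s) (b := s + t) (c := N) (d := N)
      (by omega) hNB (by linarith)
    omega
  · have := Nat.eq_and_eq_of_add_mul_eq_add_mul (B := B) (a := s) (b := s + t) (c := 0) (d := N)
      (by omega) (by omega) (by linarith)
    omega

theorem sum_range_succ_mul_add_sum_range_partialSum {R : Type*} [CommRing R] (δ : ℕ → R)
    (n : ℕ) :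
    ∑ i ∈ range n, ((i : R) + 1) * δ i + ∑ v ∈ range n, ∑ i ∈ range v, δ i
      = n * ∑ i ∈ range n, δ i := by
  induction n with
  | zero => simp
  | succ n ih =>
    simp only [sum_range_succ]
    push_cast
    linear_combination ih

theorem eq_zero_of_sum_mul_eq_zero_of_partialSum_nonneg {n : ℕ} {C W : ℤ} {δ : ℕ → ℤ}
    (hW : 0 ≤ W) (hC : n * n * W < C) (hδ : ∀ i < n, δ i ≤ W)
    (hpre : ∀ v < n, 0 ≤ ∑ i ∈ range v, δ i)
    (hsum : ∑ i ∈ range n, (C + i + 1) * δ i = 0) :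
    ∀ i < n, δ i = 0 := by
  set D : ℕ → ℤ := fun v => ∑ i ∈ range v, δ i with hD
  have hDle : ∀ v ≤ n, D v ≤ n * W := fun v hv =>
    calc D v ≤ ∑ _i ∈ range v, W := sum_le_sum fun i hi => hδ i (by simp at hi; omega)
      _ = v * W := by simp
      _ ≤ n * W := by gcongr
  have habel : (C + n) * D n = ∑ v ∈ range n, D v := by
    have : ∑ i ∈ range n, ((i : ℤ) + 1) * δ i + ∑ v ∈ range n, D v = n * D n :=
      sum_range_succ_mul_add_sum_range_partialSum δ n
    have hsplit : ∑ i ∈ range n, (C + i + 1) * δ i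
        = C * D n + ∑ i ∈ range n, ((i : ℤ) + 1) * δ i := by
      simp only [hD, mul_sum, ← sum_add_distrib]
      exact sum_congr rfl fun i _ => by ring
    linear_combination -this - hsplit + hsum
  have hsum_nonneg : 0 ≤ ∑ v ∈ range n, D v :=
    sum_nonneg fun v hv => hpre v (mem_range.1 hv)
  have hsum_lt : ∑ v ∈ range n, D v < C :=
    calc ∑ v ∈ range n, D v ≤ ∑ _v ∈ range n, n * W :=
          sum_le_sum fun v hv => hDle v (mem_range.1 hv).le
      _ = n * n * W := by simp; ring
      _ < C := hC
  have hCpos : 0 < C := by nlinarith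
  have hDn : D n = 0 := by
    rcases lt_trichotomy (D n) 0 with h | h | h <;> [nlinarith; exact h; nlinarith]
  have hDall : ∀ v < n, D v = 0 := by
    have h0 : ∑ v ∈ range n, D v = 0 := by rw [← habel, hDn, mul_zero]
    intro v hv
    exact (sum_eq_zero_iff_of_nonneg fun w hw => hpre w (mem_range.1 hw)).1 h0 v
      (mem_range.2 hv)
  intro i hi
  have hstep : D (i + 1) = D i + δ i := sum_range_succ δ i
  have hnext : D (i + 1) = 0 :=
    if h : i + 1 < n then hDall _ h else by rw [show i + 1 = n by omega, hDn]
  linarith [hDall i hi]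

theorem eq_of_sum_mul_eq_of_partialSum_ge {n C W : ℕ} {a : ℕ → ℕ} (hC : n * n * W < C)
    (ha : ∀ i < n, a i ≤ 2 * W)
    (hpre : ∀ v < n, W * v ≤ ∑ i ∈ range v, a i)
    (hsum : ∑ i ∈ range n, (C + i + 1) * a i = ∑ i ∈ range n, (C + i + 1) * W) :
    ∀ i < n, a i = W := by
  have key := eq_zero_of_sum_mul_eq_zero_of_partialSum_nonneg (n := n) (C := C) (W := W)
    (δ := fun i => (a i : ℤ) - W) (by positivity) (by exact_mod_cast hC)
    (fun i hi => by have := ha i hi; omega)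
    (fun v hv => by
      have := hpre v hv
      simp only [sum_sub_distrib, sum_const, card_range, nsmul_eq_mul, sub_nonneg]
      rw [mul_comm]; exact_mod_cast this)
    (by
      simp only [mul_sub, sum_sub_distrib, sub_eq_zero]
      exact_mod_cast hsum)
  intro i hi
  have := key i hi
  omega

variable {n m : ℕ}

theorem Nval_le (hm : 0 < m) : Nval m ≤ 10 * m ^ 2 := by
  unfold Nval; nlinarith

theorem hundred_mul_sq_le_Bval (hn : 0 < n) : 100 * m ^ 2 ≤ Bval n m := by
  unfold Bval; nlinarith [Nat.one_le_pow 2 n hn]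

theorem succ_lt_Bval (hn : 0 < n) (hm : 0 < m) : m + 1 < Bval n m := by
  nlinarith [hundred_mul_sq_le_Bval (m := m) hn]

theorem Nval_lt_Bval (hn : 0 < n) (hm : 0 < m) : Nval m < Bval n m := by
  nlinarith [hundred_mul_sq_le_Bval (m := m) hn, Nval_le hm]

theorem mul_six_mul_mul_succ_lt_Bval (hn : 0 < n) (hm : 0 < m) :
    n * (6 * m * (m + 1)) < Bval n m := by
  calc n * (6 * m * (m + 1)) ≤ n ^ 2 * (12 * m ^ 2) :=
        Nat.mul_le_mul (by nlinarith) (by nlinarith)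
    _ < Bval n m := by unfold Bval; nlinarith [Nat.mul_pos (pow_pos hn 2) (pow_pos hm 2)]

theorem mul_self_mul_Nval_mul_lt_sq_Bval (hn : 0 < n) (hm : 0 < m) :
    n * n * (Nval m * (Bval n m + 1)) < Bval n m ^ 2 := by
  have hB := hundred_mul_sq_le_Bval (m := m) hn
  calc n * n * (Nval m * (Bval n m + 1)) ≤ n * n * (10 * m ^ 2 * (2 * Bval n m)) := by
        gcongr
        · exact Nval_le hm
        · nlinarith
    _ < Bval n m ^ 2 := by
        unfold Bval at hB ⊢
        nlinarith [Nat.mul_le_mul (Nat.one_le_pow 2 n hn) (Nat.one_le_pow 2 m hm)]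

/-- The item `w̄_{i, 3m(m+1)+1}`. -/
def isExtra : Item n m → Bool
  | Sum.inl _ => false
  | Sum.inr (_, l, pos) => !pos && (l : ℕ) == 3 * m * (m + 1)

def weight (y : Item n m) : ℕ :=
  if itemPos y then Bval n m + 1 else if isExtra y then Bval n m + Nval m else Bval n m

def residue (c : Fin m → Fin 3 → Fin n × Bool) : Item n m → ℕ
  | Sum.inl (i, j, k, pos) => if c j k = (i, pos) then (j : ℕ) + 2 else 0
  | Sum.inr (i, l, pos) =>
      if (l : ℕ) + 1 ≤ 3 * m * (m + 1) - (if pos then Kv n m c i else Kbv n m c i) then 1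
      else 0

theorem itemPos_eq_false_of_isExtra {y : Item n m} (h : isExtra y = true) :
    itemPos y = false := by
  rcases y with _ | ⟨i, l, _ | _⟩ <;> simp_all [isExtra, itemPos]

theorem p1_eq_weight_add_residue (c : Fin m → Fin 3 → Fin n × Bool) (y : Item n m) :
    p1 n m c y = (Bval n m ^ 2 + itemVar y + 1) * Bval n m * weight y + residue c y := by
  rcases y with ⟨i, j, k, _ | _⟩ | ⟨i, l, _ | _⟩ <;>
    simp only [p1, pu, pub, weight, residue, itemPos, itemVar, isExtra, Bool.false_eq_true,
      Bool.not_false, Bool.true_and, beq_iff_eq, ↓reduceIte] <;>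
    split_ifs <;> first | (exfalso; omega) | ring

theorem residue_le (c : Fin m → Fin 3 → Fin n × Bool) (y : Item n m) :
    residue c y ≤ m + 1 := by
  rcases y with ⟨i, j, k, pos⟩ | ⟨i, l, pos⟩
  · have := j.isLt; simp only [residue]; split_ifs <;> omega
  · simp only [residue]; split_ifs <;> omega

theorem p1_mod_Bval (hn : 0 < n) (hm : 0 < m) (c : Fin m → Fin 3 → Fin n × Bool)
    (y : Item n m) : p1 n m c y % Bval n m = residue c y := by
  rw [p1_eq_weight_add_residue, mul_comm _ (Bval n m), mul_assoc, Nat.mul_add_mod,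
    Nat.mod_eq_of_lt ((residue_le c y).trans_lt (succ_lt_Bval hn hm))]

theorem sum_residue_inl_eq (hn : 0 < n) (hm : 0 < m) (c : Fin m → Fin 3 → Fin n × Bool)
    (i : Fin n) (pos : Bool) :
    ∑ j, ∑ k, residue c (.inl (i, j, k, pos)) = if pos then Kv n m c i else Kbv n m c i := by
  cases pos <;>
    exact (sum_congr rfl fun j _ => sum_congr rfl fun k _ => p1_mod_Bval hn hm c _).symm

theorem sum_residue_inl_le (c : Fin m → Fin 3 → Fin n × Bool) (i : Fin n) (pos : Bool) :
    ∑ j, ∑ k, residue c (.inl (i, j, k, pos)) ≤ 3 * m * (m + 1) :=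
  calc _ ≤ ∑ _j : Fin m, ∑ _k : Fin 3, (m + 1) :=
        sum_le_sum fun j _ => sum_le_sum fun k _ => residue_le c _
    _ = 3 * m * (m + 1) := by simp only [sum_const, card_univ, Fintype.card_fin, smul_eq_mul]; ring

/-- The sum of `f` over `Y_{i+1}`: variable indices are 0-based here, as for `itemVar`. -/
def varSum (f : Item n m → ℕ) (i : ℕ) : ℕ :=
  ∑ y, if (itemVar y : ℕ) = i then f y else 0

theorem varSum_congr {f g : Item n m → ℕ} {i : ℕ}
    (h : ∀ y, (itemVar y : ℕ) = i → f y = g y) : varSum f i = varSum g i :=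
  sum_congr rfl fun y _ => by split_ifs with hy <;> simp [h y, hy]

theorem varSum_mono {f g : Item n m → ℕ} (h : ∀ y, f y ≤ g y) (i : ℕ) :
    varSum f i ≤ varSum g i :=
  sum_le_sum fun y _ => by split_ifs <;> simp [h y]

theorem varSum_add (f g : Item n m → ℕ) (i : ℕ) :
    varSum (fun y => f y + g y) i = varSum f i + varSum g i := by
  simp only [varSum, ← sum_add_distrib]
  exact sum_congr rfl fun y _ => by split_ifs <;> simp

theorem varSum_const_mul (a : ℕ) (f : Item n m → ℕ) (i : ℕ) :
    varSum (fun y => a * f y) i = a * varSum f i := by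
  simp only [varSum, mul_sum]
  exact sum_congr rfl fun y _ => by split_ifs <;> simp

theorem sum_range_varSum (f : Item n m → ℕ) (v : ℕ) :
    ∑ i ∈ range v, varSum f i = ∑ y, if (itemVar y : ℕ) < v then f y else 0 := by
  simp only [varSum]
  rw [sum_comm]
  exact sum_congr rfl fun y _ => by simp [sum_ite_eq]

theorem sum_eq_sum_range_varSum (f : Item n m → ℕ) :
    ∑ y, f y = ∑ i ∈ range n, varSum f i := by
  simp [sum_range_varSum]

theorem varSum_eq_of_lt (f : Item n m → ℕ) {i : ℕ} (hi : i < n) :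
    varSum f i = ∑ j, ∑ k, ∑ pos, f (.inl (⟨i, hi⟩, j, k, pos))
      + ∑ l, ∑ pos, f (.inr (⟨i, hi⟩, l, pos)) := by
  simp only [varSum, Fintype.sum_sum_type, Fintype.sum_prod_type, itemVar]
  rw [sum_eq_single (⟨i, hi⟩ : Fin n), sum_eq_single (⟨i, hi⟩ : Fin n)] <;>
    simp +contextual [Fin.ext_iff]

theorem sum_fin_ite_succ_le {k a : ℕ} (ha : a ≤ k) :
    ∑ l : Fin k, (if (l : ℕ) + 1 ≤ a then 1 else 0) = a := by
  rw [Fin.sum_univ_eq_sum_range (fun l => if l + 1 ≤ a then 1 else 0), sum_boole]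
  have : (range k).filter (fun l => l + 1 ≤ a) = range a := by
    ext l; simp; omega
  rw [this, card_range, Nat.cast_id]

theorem varSum_weight {i : ℕ} (hi : i < n) :
    varSum (weight : Item n m → ℕ) i = 2 * (Nval m * (Bval n m + 1)) := by
  rw [varSum_eq_of_lt _ hi, Fin.sum_univ_castSucc]
  simp [weight, isExtra, itemPos, (Fin.is_lt _).ne, Nval]
  ring

theorem varSum_isExtra {i : ℕ} (hi : i < n) :
    varSum (fun y : Item n m => if isExtra y then 1 else 0) i = 1 := by
  rw [varSum_eq_of_lt _ hi, Fin.sum_univ_castSucc]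
  simp [isExtra, (Fin.is_lt _).ne]

theorem varSum_itemPos {i : ℕ} (hi : i < n) :
    varSum (fun y : Item n m => if itemPos y then 1 else 0) i = Nval m := by
  rw [varSum_eq_of_lt _ hi]
  simp [itemPos, Nval]
  ring

theorem varSum_not_itemPos {i : ℕ} (hi : i < n) :
    varSum (fun y : Item n m => if !itemPos y then 1 else 0) i = Nval m := by
  rw [varSum_eq_of_lt _ hi]
  simp [itemPos, Nval]
  ring

theorem varSum_residue (hn : 0 < n) (hm : 0 < m) (c : Fin m → Fin 3 → Fin n × Bool) {i : ℕ}
    (hi : i < n) : varSum (residue c) i = 6 * m * (m + 1) := by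
  have hK := sum_residue_inl_eq hn hm c ⟨i, hi⟩
  have hKv : Kv n m c ⟨i, hi⟩ ≤ 3 * m * (m + 1) :=
    (hK true).symm.trans_le (sum_residue_inl_le c _ true)
  have hKbv : Kbv n m c ⟨i, hi⟩ ≤ 3 * m * (m + 1) :=
    (hK false).symm.trans_le (sum_residue_inl_le c _ false)
  rw [varSum_eq_of_lt _ hi]
  simp only [Fintype.sum_bool, sum_add_distrib]
  rw [hK true, hK false]
  simp only [residue, if_true, Bool.false_eq_true, if_false]
  rw [sum_fin_ite_succ_le (by omega), sum_fin_ite_succ_le (by omega)]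
  have : 6 * m * (m + 1) = 2 * (3 * m * (m + 1)) := by ring
  omega

theorem varSum_ite_add_varSum_ite_not (g : Item n m → Bool) (f : Item n m → ℕ) (i : ℕ) :
    varSum (fun y => if g y then f y else 0) i + varSum (fun y => if !g y then f y else 0) i
      = varSum f i := by
  rw [← varSum_add]
  exact varSum_congr fun y _ => by cases g y <;> simp

theorem varSum_ite_p1 (c : Fin m → Fin 3 → Fin n × Bool) (g : Item n m → Bool) (i : ℕ) :
    varSum (fun y => if g y then p1 n m c y else 0) i
      = (Bval n m ^ 2 + i + 1) * Bval n m * varSum (fun y => if g y then weight y else 0) i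
        + varSum (fun y => if g y then residue c y else 0) i := by
  rw [← varSum_const_mul, ← varSum_add]
  refine varSum_congr fun y hy => ?_
  rw [p1_eq_weight_add_residue, hy]
  split_ifs <;> ring

theorem varSum_p1 (hn : 0 < n) (hm : 0 < m) (c : Fin m → Fin 3 → Fin n × Bool) {i : ℕ}
    (hi : i < n) :
    varSum (p1 n m c) i
      = (Bval n m ^ 2 + i + 1) * Bval n m * (2 * (Nval m * (Bval n m + 1))) + 6 * m * (m + 1) := by
  have h := varSum_ite_p1 c (fun _ => true) i
  simp only [if_true] at h
  rw [h, varSum_weight hi, varSum_residue hn hm c hi]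

theorem Rval_eq :
    Rval n m = Bval n m * ∑ i ∈ range n, (Bval n m ^ 2 + i + 1) * (Nval m * (Bval n m + 1))
      + 3 * m * (m + 1) * n := by
  have hgauss : ∑ i ∈ range n, (i + 1) = n * (n + 1) / 2 := by
    have h := sum_range_succ' (fun i => i) n
    simp only [add_zero] at h
    rw [← h, sum_range_id, Nat.add_sub_cancel, mul_comm]
  have hsum : ∑ i ∈ range n, (Bval n m ^ 2 + i + 1)
      = n * Bval n m ^ 2 + n * (n + 1) / 2 := by
    simp only [add_assoc, sum_add_distrib, sum_const, card_range, smul_eq_mul, hgauss]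
  rw [Rval, ← sum_mul, hsum]
  ring

theorem sum_p1 (hn : 0 < n) (hm : 0 < m) (c : Fin m → Fin 3 → Fin n × Bool) :
    ∑ y, p1 n m c y = 2 * Rval n m := by
  rw [sum_eq_sum_range_varSum, sum_congr rfl fun i hi => varSum_p1 hn hm c (mem_range.1 hi),
    Rval_eq, sum_add_distrib, sum_const, card_range, smul_eq_mul, mul_sum]
  rw [sum_congr rfl fun i _ => show _ = 2 * (Bval n m * ((Bval n m ^ 2 + i + 1) *
    (Nval m * (Bval n m + 1)))) by ring, ← mul_sum]
  ring

theorem a1_le (y : Item n m) : a1 y ≤ n := (itemVar y).isLt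

theorem succ_le_a2 (c : Fin m → Fin 3 → Fin n × Bool) (y : Item n m) : n + 1 ≤ a2 n m c y := by
  rcases y with ⟨i, j, k, pos⟩ | ⟨i, l, _ | _⟩ <;> simp only [a2] <;> split_ifs <;> omega

theorem a2_le (c : Fin m → Fin 3 → Fin n × Bool) (y : Item n m) : a2 n m c y ≤ n + m + 2 := by
  rcases y with ⟨i, j, k, pos⟩ | ⟨i, l, _ | _⟩ <;> simp only [a2] <;> split_ifs <;> grind

def delayedWeight (z : Item n m → Bool) (i : ℕ) : ℕ :=
  varSum (fun y => if z y then weight y else 0) i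

theorem delayedWeight_eq_count (z : Item n m → Bool) (i : ℕ) :
    delayedWeight z i
      = (Bval n m + 1) * varSum (fun y => if itemPos y && z y then 1 else 0) i
        + Bval n m * varSum (fun y => if !itemPos y && z y then 1 else 0) i
        + Nval m * varSum (fun y => if isExtra y && z y then 1 else 0) i := by
  simp only [delayedWeight, ← varSum_const_mul, ← varSum_add]
  refine varSum_congr fun y _ => ?_
  cases hx : isExtra y
  · cases hp : itemPos y <;> cases z y <;> simp [weight, hx, hp]
  · cases z y <;> simp [weight, hx, itemPos_eq_false_of_isExtra hx]

theorem forall_of_varSum_and_eq (p q : Item n m → Bool) {i : ℕ}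
    (h : varSum (fun y => if p y && q y then 1 else 0) i
      = varSum (fun y => if p y then 1 else 0) i) :
    ∀ y, (itemVar y : ℕ) = i → p y → q y := by
  intro y hy hp
  have hle : ∀ y ∈ (univ : Finset (Item n m)),
      (if (itemVar y : ℕ) = i then (if p y && q y then 1 else 0) else 0)
        ≤ if (itemVar y : ℕ) = i then (if p y then 1 else 0) else 0 := by
    intro y _; by_cases hv : (itemVar y : ℕ) = i <;> cases p y <;> cases q y <;> simp [hv]
  have := (sum_eq_sum_iff_of_le hle).1 h y (mem_univ y)
  simpa [hy, hp] using this

theorem forall_not_of_varSum_and_eq_zero (p q : Item n m → Bool) {i : ℕ}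
    (h : varSum (fun y => if p y && q y then 1 else 0) i = 0) :
    ∀ y, (itemVar y : ℕ) = i → p y → q y = false := by
  intro y hy hp
  have := (sum_eq_zero_iff.1 h) y (mem_univ y)
  simpa [hy, hp] using this

theorem Xset_inter_Yset_eq_filter (z : Item n m → Bool) (i : Fin n) (p : Item n m → Bool)
    (h : ∀ y, itemVar y = i → z y = p y) :
    Xset n m z ∩ Yset n m i = univ.filter fun y => itemVar y = i ∧ p y = true := by
  ext y
  simp only [Xset, Yset, mem_inter, mem_filter, mem_univ, true_and]
  constructor
  · rintro ⟨hz, hy⟩; exact ⟨hy, h y hy ▸ hz⟩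
  · rintro ⟨hy, hp⟩; exact ⟨(h y hy).trans hp, hy⟩

section Feasible

variable {c : Fin m → Fin 3 → Fin n × Bool} {z : Item n m → Bool}

theorem Feasible.sum_range_varSum_onTime_le (hz : Feasible n m c z) {v : ℕ} (hv1 : 1 ≤ v)
    (hv : v ≤ n) :
    ∑ i ∈ range v, varSum (fun y => if !z y then p1 n m c y else 0) i ≤ qv n m v := by
  refine le_of_eq_of_le ?_ (hz v hv1 (by omega))
  rw [sum_range_varSum]
  refine sum_congr rfl fun y _ => ?_
  have := succ_le_a2 c y
  cases z y
  · simp [a1]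
  · simp only [Bool.not_true, Bool.false_eq_true, ↓reduceIte, ite_self]
    rw [if_neg (by omega)]

theorem Feasible.sum_le (hz : Feasible n m c z) :
    ∑ y, (if z y then 2 * p1 n m c y else p1 n m c y) ≤ 3 * Rval n m := by
  have h := hz (n + m + 2) (by omega) le_rfl
  rw [qv, if_neg (by omega), if_neg (by omega), if_neg (by omega), if_neg (by omega)] at h
  refine le_of_eq_of_le (sum_congr rfl fun y _ => ?_) h
  have := a1_le y
  have := a2_le c y
  split_ifs <;> first | rfl | omega

theorem Feasible.sum_delayed_p1_eq_Rval (hn : 0 < n) (hm : 0 < m) (hz : Feasible n m c z) :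
    ∑ y, (if z y then p1 n m c y else 0) = Rval n m := by
  have hOnTime : ∑ y, (if !z y then p1 n m c y else 0) ≤ Rval n m := by
    have h := hz.sum_range_varSum_onTime_le hn le_rfl
    rwa [← sum_eq_sum_range_varSum, qv, if_neg (lt_irrefl n), if_pos rfl] at h
  have hsplit : ∑ y, (if z y then p1 n m c y else 0) + ∑ y, (if !z y then p1 n m c y else 0)
      = 2 * Rval n m := by
    rw [← sum_p1 hn hm c, ← sum_add_distrib]
    exact sum_congr rfl fun y _ => by cases z y <;> simp
  have hlast : ∑ y, (if z y then 2 * p1 n m c y else p1 n m c y)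
      = 2 * Rval n m + ∑ y, (if z y then p1 n m c y else 0) := by
    rw [← sum_p1 hn hm c, ← sum_add_distrib]
    exact sum_congr rfl fun y _ => by cases z y <;> simp [two_mul]
  have := hz.sum_le
  omega

theorem Feasible.sum_mul_delayedWeight_eq (hn : 0 < n) (hm : 0 < m) (hz : Feasible n m c z) :
    ∑ i ∈ range n, (Bval n m ^ 2 + i + 1) * delayedWeight z i
      = ∑ i ∈ range n, (Bval n m ^ 2 + i + 1) * (Nval m * (Bval n m + 1)) := by
  have hD := hz.sum_delayed_p1_eq_Rval hn hm
  rw [sum_eq_sum_range_varSum, sum_congr rfl fun i _ => varSum_ite_p1 c z i, sum_add_distrib,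
    Rval_eq] at hD
  have hres : ∑ i ∈ range n, varSum (fun y => if z y then residue c y else 0) i < Bval n m :=
    calc _ ≤ ∑ _i ∈ range n, 6 * m * (m + 1) := sum_le_sum fun i hi =>
          (varSum_mono (fun y => by split_ifs <;> simp) i).trans
            (varSum_residue hn hm c (mem_range.1 hi)).le
      _ < Bval n m := by simpa using mul_six_mul_mul_succ_lt_Bval hn hm
  have hK : 3 * m * (m + 1) * n < Bval n m := by
    have := mul_six_mul_mul_succ_lt_Bval hn hm; nlinarith
  have hfactor : ∑ i ∈ range n, (Bval n m ^ 2 + i + 1) * Bval n m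
        * varSum (fun y => if z y then weight y else 0) i
      = Bval n m * ∑ i ∈ range n, (Bval n m ^ 2 + i + 1) * delayedWeight z i := by
    rw [mul_sum]; exact sum_congr rfl fun i _ => by rw [delayedWeight]; ring
  exact (Nat.eq_and_eq_of_add_mul_eq_add_mul hres hK (by linarith)).2

theorem Feasible.mul_le_sum_range_delayedWeight (hn : 0 < n) (hm : 0 < m)
    (hz : Feasible n m c z) {v : ℕ} (hv : v < n) :
    Nval m * (Bval n m + 1) * v ≤ ∑ i ∈ range v, delayedWeight z i := by
  rcases Nat.eq_zero_or_pos v with rfl | hv1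
  · simp
  set onTimeWeight := fun i => varSum (fun y => if !z y then weight y else 0) i
  have hsplit : ∀ i ∈ range v, delayedWeight z i + onTimeWeight i
      = 2 * (Nval m * (Bval n m + 1)) := fun i hi => by
    rw [delayedWeight, varSum_ite_add_varSum_ite_not, varSum_weight (by simp at hi; omega)]
  have hpaid : Bval n m ^ 3 * ∑ i ∈ range v, onTimeWeight i
      ≤ Nval m * (Bval n m + 1) * v * Bval n m ^ 3 + (Bval n m ^ 3 - 1) := by
    have h := hz.sum_range_varSum_onTime_le hv1 hv.le
    rw [qv, if_pos hv] at h
    refine le_trans ?_ h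
    rw [mul_sum]
    refine sum_le_sum fun i _ => ?_
    rw [varSum_ite_p1 c (fun y => !z y) i]
    calc Bval n m ^ 3 * onTimeWeight i
        ≤ (Bval n m ^ 2 + i + 1) * Bval n m * onTimeWeight i := by
          gcongr; rw [pow_succ]; gcongr; omega
      _ ≤ _ := Nat.le_add_right _ _
  have hB3 : 0 < Bval n m ^ 3 :=
    pow_pos ((Nat.zero_le _).trans_lt (Nval_lt_Bval hn hm)) 3
  have honTime : ∑ i ∈ range v, onTimeWeight i ≤ Nval m * (Bval n m + 1) * v := by
    refine Nat.le_of_lt_succ (Nat.lt_of_mul_lt_mul_left (a := Bval n m ^ 3) ?_)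
    calc _ ≤ _ := hpaid
      _ < Nval m * (Bval n m + 1) * v * Bval n m ^ 3 + Bval n m ^ 3 := by omega
      _ = Bval n m ^ 3 * (Nval m * (Bval n m + 1) * v + 1) := by ring
  have htotal := sum_congr rfl hsplit
  rw [sum_add_distrib, sum_const, card_range, smul_eq_mul] at htotal
  linarith

theorem Feasible.delayedWeight_eq (hn : 0 < n) (hm : 0 < m) (hz : Feasible n m c z) :
    ∀ i < n, delayedWeight z i = Nval m * (Bval n m + 1) :=
  eq_of_sum_mul_eq_of_partialSum_ge (mul_self_mul_Nval_mul_lt_sq_Bval hn hm)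
    (fun i hi => by
      rw [← varSum_weight hi, delayedWeight]
      exact varSum_mono (fun y => by split_ifs <;> simp) i)
    (fun v hv => hz.mul_le_sum_range_delayedWeight hn hm hv)
    (hz.sum_mul_delayedWeight_eq hn hm)

theorem Feasible.eq_itemPos_or_eq_not_itemPos (hn : 0 < n) (hm : 0 < m)
    (hz : Feasible n m c z) (i : Fin n) :
    (∀ y, itemVar y = i → z y = itemPos y) ∨ (∀ y, itemVar y = i → z y = !itemPos y) := by
  have hW := hz.delayedWeight_eq hn hm i i.isLt
  rw [delayedWeight_eq_count] at hW
  have hs : varSum (fun y => if itemPos y && z y then 1 else 0) i ≤ Nval m :=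
    (varSum_mono (fun y => by cases itemPos y <;> cases z y <;> simp) _).trans
      (varSum_itemPos i.isLt).le
  have he : varSum (fun y => if isExtra y && z y then 1 else 0) i ≤ 1 :=
    (varSum_mono (fun y => by cases isExtra y <;> cases z y <;> simp) _).trans
      (varSum_isExtra i.isLt).le
  rcases eq_or_eq_of_mul_add_mul_add_mul_eq (Nval_lt_Bval hn hm) hs he hW with
    ⟨hpos, hneg⟩ | ⟨hpos, hneg⟩
  · left
    intro y hy
    have h1 := forall_of_varSum_and_eq _ _ (hpos.trans (varSum_itemPos i.isLt).symm) y
      (congrArg _ hy)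
    have h2 := forall_not_of_varSum_and_eq_zero _ _ hneg y (congrArg _ hy)
    cases hp : itemPos y <;> simp_all
  · right
    intro y hy
    have h1 := forall_not_of_varSum_and_eq_zero _ _ hpos y (congrArg _ hy)
    have h2 := forall_of_varSum_and_eq _ _ (hneg.trans (varSum_not_itemPos i.isLt).symm) y
      (congrArg _ hy)
    cases hp : itemPos y <;> simp_all

end Feasible

/-- For every feasible solution of the constructed arrears instance `I′` and every
variable index `i`, either `X ∩ Y_i = T_i` or `X ∩ Y_i = T̄_i`. -/
theorem feasible_sol_welldefined (n m : ℕ) (hn : 0 < n) (hm : 0 < m)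
    (c : Fin m → Fin 3 → Fin n × Bool)
    (z : Item n m → Bool) (hz : Feasible n m c z) :
    ∀ i : Fin n,
      Xset n m z ∩ Yset n m i = Tset n m i ∨ Xset n m z ∩ Yset n m i = Tbar n m i := by
  intro i
  rcases hz.eq_itemPos_or_eq_not_itemPos hn hm i with h | h
  · exact .inl (Xset_inter_Yset_eq_filter z i _ h)
  · right
    rw [Xset_inter_Yset_eq_filter z i _ h, Tbar]
    simp
end

section
/- For every feasible solution of the constructed arrears instance I′ and for every j = 2,…,m+1, letting Z_j = {y : a_{y,2} = n+1+j}, we have |X ∩ Z_j| = 1; that is, among the items corresponding to the three literals of clause c_{j−1}, exactly one is in X. -/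
/-
Every first payment has the form `p = (B² + i) (B + e) B + r` with `r < B`, and the second
payment date of an item is `n + 1 + r`. The budgets of days `n` and `n + m + 2`, together with
the total `2R` of all first payments, force the deferred items `X` to carry exactly `R`; reading
this modulo `B`, their residues `r` add up to `3m(m+1)n`. Let `L t` count the items of `X` with
residue `> t`, so that `L 0 + ⋯ + L m = 3m(m+1)n`. Reading the budget of day `n + 1 + t` in
base `B` gives `6m(m+1)n ≤ m(m+1) + 2 L 0` for `t = 0` and `m + 1 - t ≤ L t` for `1 ≤ t ≤ m`.
Hence `L 1 + ⋯ + L m ≤ m(m+1)/2 = ∑ (m + 1 - t)`, which forces `L t = m + 1 - t`. As `Z_j` is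
the set of items of residue `j`, `|X ∩ Z_j| = L (j - 1) - L j = 1` for `2 ≤ j ≤ m + 1`.
-/

namespace Arrears

open Finset

variable {n m : ℕ} {c : Fin m → Fin 3 → Fin n × Bool}

def itemBonus (m : ℕ) : Item n m → ℕ
  | Sum.inl (_, _, _, pos) => if pos then 1 else 0
  | Sum.inr (_, l, pos) => if pos then 1 else if l = Fin.last _ then Nval m else 0

def itemResidue (n m : ℕ) (c : Fin m → Fin 3 → Fin n × Bool) : Item n m → ℕ
  | Sum.inl (i, j, k, pos) => if c j k = (i, pos) then (j : ℕ) + 2 else 0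
  | Sum.inr (i, l, pos) =>
      if (l : ℕ) + 1 ≤ 3 * m * (m + 1) - (if pos then Kv n m c i else Kbv n m c i) then 1 else 0

lemma p1_eq (y : Item n m) :
    p1 n m c y = (Bval n m ^ 2 + ((itemVar y : ℕ) + 1)) * (Bval n m + itemBonus m y) * Bval n m
      + itemResidue n m c y := by
  rcases y with ⟨i, j, k, _ | _⟩ | ⟨i, l, _ | _⟩
  · simp only [p1, pub, itemVar, itemBonus, itemResidue, Bool.false_eq_true, ↓reduceIte]; ring
  · simp only [p1, pu, itemVar, itemBonus, itemResidue, ↓reduceIte]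
  · by_cases h : l = Fin.last _
    · subst h
      simp only [p1, itemVar, itemBonus, itemResidue, Bool.false_eq_true, ↓reduceIte, Fin.val_last]
      split_ifs <;> omega
    · have hl : (l : ℕ) + 1 ≤ 3 * m * (m + 1) := by
        have := Fin.val_lt_last h; omega
      simp only [p1, itemVar, itemBonus, itemResidue, Bool.false_eq_true, ↓reduceIte, h, hl]
      split_ifs <;> ring
  · simp only [p1, itemVar, itemBonus, itemResidue, ↓reduceIte]
    split_ifs <;> ring

lemma a2_eq (y : Item n m) : a2 n m c y = n + 1 + itemResidue n m c y := by
  rcases y with ⟨i, j, k, pos⟩ | ⟨i, l, _ | _⟩ <;>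
    simp only [a2, itemResidue] <;> split_ifs <;> omega

lemma itemResidue_le (y : Item n m) : itemResidue n m c y ≤ m + 1 := by
  rcases y with ⟨i, j, k, pos⟩ | ⟨i, l, pos⟩ <;> simp only [itemResidue] <;> split_ifs <;> omega

lemma itemBonus_le_one (y : Item n m) (hy : 0 < itemResidue n m c y) : itemBonus m y ≤ 1 := by
  rcases y with ⟨i, j, k, pos⟩ | ⟨i, l, _ | _⟩
  · simp only [itemBonus]; split_ifs <;> omega
  · simp only [itemBonus, itemResidue, Bool.false_eq_true, ↓reduceIte] at hy ⊢
    split_ifs at hy ⊢ with h₁ h₂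
    · simp only [h₁, Fin.val_last] at h₂; omega
    all_goals omega
  · simp [itemBonus]

lemma twelve_mul_le_Bval : 12 * m * (m + 1) * n ^ 2 ≤ Bval n m := by
  have : m * (m + 1) ≤ 2 * m ^ 2 := by nlinarith
  unfold Bval; nlinarith [Nat.zero_le (n ^ 2)]

lemma six_mul_lt_Bval (hn : 0 < n) (hm : 0 < m) : 2 * (3 * m * (m + 1)) * n < Bval n m := by
  have hpos : 0 < m * (m + 1) * n := by positivity
  have hn2 : n ≤ n ^ 2 := Nat.le_self_pow two_ne_zero n
  calc 2 * (3 * m * (m + 1)) * n < 12 * (m * (m + 1)) * n := by nlinarith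
    _ ≤ 12 * (m * (m + 1)) * n ^ 2 := by gcongr
    _ = 12 * m * (m + 1) * n ^ 2 := by ring
    _ ≤ Bval n m := twelve_mul_le_Bval

lemma succ_lt_Bval (hn : 0 < n) (hm : 0 < m) : m + 1 < Bval n m := by
  have := six_mul_lt_Bval hn hm
  have : 1 ≤ m * n := Nat.mul_pos hm hn
  nlinarith

lemma six_mul_add_one_le (hn : 0 < n) : 2 * (3 * m * (m + 1) * n) + 1 ≤ 3 * Nval m * n := by
  have : 3 * Nval m * n = 2 * (3 * m * (m + 1) * n) + (3 * m ^ 2 + 12 * m + 3) * n := by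
    unfold Nval; ring
  have : 3 ≤ (3 * m ^ 2 + 12 * m + 3) * n := by nlinarith
  omega

lemma three_mul_Nval (n m : ℕ) :
    3 * Nval m * n = Nval m * n + 6 * m * n + 2 * n + 2 * (3 * m * (m + 1) * n) := by
  unfold Nval; ring

lemma Rval_ge : Nval m * n * Bval n m ^ 4 + Nval m * n * Bval n m ^ 3 ≤ Rval n m := by
  calc _ = Nval m * (Bval n m + 1) * (n * Bval n m ^ 2) * Bval n m := by ring
    _ ≤ Nval m * (Bval n m + 1) * (n * Bval n m ^ 2 + n * (n + 1) / 2) * Bval n m := by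
        gcongr; exact Nat.le_add_right _ _
    _ ≤ Rval n m := Nat.le_add_right _ _

lemma Rval_mod (hn : 0 < n) (hm : 0 < m) : Rval n m % Bval n m = 3 * m * (m + 1) * n := by
  have h := six_mul_lt_Bval hn hm
  unfold Rval
  rw [Nat.mul_add_mod_self_right, Nat.mod_eq_of_lt (by linarith)]

lemma sum_item {M : Type*} [AddCommMonoid M] (f : Item n m → M) :
    ∑ y, f y = ∑ i : Fin n, ∑ pos : Bool, ((∑ j : Fin m, ∑ k : Fin 3, f (Sum.inl (i, j, k, pos)))
      + ∑ l : Fin (3 * m * (m + 1) + 1), f (Sum.inr (i, l, pos))) := by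
  simp only [Fintype.sum_sum_type, Fintype.sum_prod_type, sum_add_distrib]
  congr 1
  · refine sum_congr rfl fun i _ => ?_
    symm; rw [sum_comm]; exact sum_congr rfl fun j _ => sum_comm
  · exact sum_congr rfl fun i _ => sum_comm

lemma itemResidue_eq_p1_mod (hn : 0 < n) (hm : 0 < m) (y : Item n m) :
    itemResidue n m c y = p1 n m c y % Bval n m := by
  rw [p1_eq, Nat.add_comm, Nat.add_mul_mod_self_right,
    Nat.mod_eq_of_lt ((itemResidue_le y).trans_lt (succ_lt_Bval hn hm))]

lemma sum_itemResidue_inl (hn : 0 < n) (hm : 0 < m) (i : Fin n) (pos : Bool) :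
    ∑ j, ∑ k, itemResidue n m c (.inl (i, j, k, pos))
      = if pos then Kv n m c i else Kbv n m c i := by
  simp only [itemResidue_eq_p1_mod hn hm]
  cases pos <;> rfl

lemma sum_itemResidue_T (hn : 0 < n) (hm : 0 < m) (i : Fin n) (pos : Bool) :
    (∑ j, ∑ k, itemResidue n m c (.inl (i, j, k, pos))) + ∑ l, itemResidue n m c (.inr (i, l, pos))
      = 3 * m * (m + 1) := by
  have hK : ∑ j, ∑ k, itemResidue n m c (.inl (i, j, k, pos)) ≤ 3 * m * (m + 1) :=
    calc _ ≤ ∑ _j : Fin m, ∑ _k : Fin 3, (m + 1) :=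
          sum_le_sum fun j _ => sum_le_sum fun k _ => itemResidue_le _
      _ = 3 * m * (m + 1) := by
          simp only [sum_const, card_univ, Fintype.card_fin, smul_eq_mul]; ring
  rw [sum_itemResidue_inl hn hm] at hK
  have hw : ∑ l : Fin (3 * m * (m + 1) + 1), itemResidue n m c (.inr (i, l, pos))
      = 3 * m * (m + 1) - (if pos then Kv n m c i else Kbv n m c i) := by
    simp only [itemResidue, sum_boole, Nat.add_one_le_iff, Fin.card_filter_val_lt, Nat.cast_id]
    omega
  rw [sum_itemResidue_inl hn hm, hw]
  omega

lemma sum_itemBonus_T (i : Fin n) (pos : Bool) :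
    (∑ j, ∑ k, (Bval n m + itemBonus m (.inl (i, j, k, pos) : Item n m)))
      + ∑ l, (Bval n m + itemBonus m (.inr (i, l, pos) : Item n m))
      = Nval m * (Bval n m + 1) := by
  cases pos
  · simp only [itemBonus, Bool.false_eq_true, ↓reduceIte, add_zero, sum_const, card_univ,
      Fintype.card_fin, smul_eq_mul, sum_add_distrib, sum_ite_eq', mem_univ, Nval]
    ring
  · simp only [itemBonus, ↓reduceIte, sum_const, card_univ, Fintype.card_fin, smul_eq_mul, Nval]
    ring

lemma sum_p1_T (hn : 0 < n) (hm : 0 < m) (i : Fin n) (pos : Bool) :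
    (∑ j, ∑ k, p1 n m c (.inl (i, j, k, pos))) + ∑ l, p1 n m c (.inr (i, l, pos))
      = (Bval n m ^ 2 + ((i : ℕ) + 1)) * (Nval m * (Bval n m + 1)) * Bval n m
        + 3 * m * (m + 1) := by
  calc _ = (Bval n m ^ 2 + ((i : ℕ) + 1))
          * ((∑ j, ∑ k, (Bval n m + itemBonus m (.inl (i, j, k, pos) : Item n m)))
            + ∑ l, (Bval n m + itemBonus m (.inr (i, l, pos) : Item n m))) * Bval n m
        + ((∑ j, ∑ k, itemResidue n m c (.inl (i, j, k, pos)))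
          + ∑ l, itemResidue n m c (.inr (i, l, pos))) := by
        simp only [p1_eq, itemVar, sum_add_distrib, ← sum_mul, ← mul_sum]; ring
    _ = _ := by rw [sum_itemResidue_T hn hm, sum_itemBonus_T]

lemma sum_range_succ_mul_two (k : ℕ) : (∑ i ∈ range k, (i + 1)) * 2 = k * (k + 1) := by
  induction k with
  | zero => simp
  | succ k ih => rw [sum_range_succ, add_mul, ih]; ring

lemma sum_p1 (hn : 0 < n) (hm : 0 < m) : ∑ y, p1 n m c y = 2 * Rval n m := by
  have hgauss : ∑ i : Fin n, ((i : ℕ) + 1) = n * (n + 1) / 2 := by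
    rw [Fin.sum_univ_eq_sum_range (· + 1), ← sum_range_succ_mul_two n, Nat.mul_div_cancel _ two_pos]
  simp only [sum_item, sum_p1_T hn hm, Fintype.card_bool, ← mul_sum, sum_add_distrib,
    ← sum_mul, sum_const, card_univ, Fintype.card_fin, smul_eq_mul, hgauss, Rval]
  ring

lemma sum_itemResidue (hn : 0 < n) (hm : 0 < m) :
    ∑ y, itemResidue n m c y = 2 * (3 * m * (m + 1)) * n := by
  simp only [sum_item, sum_itemResidue_T hn hm, sum_const, card_univ, Fintype.card_bool,
    Fintype.card_fin, smul_eq_mul]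
  ring

lemma p1_le_of_itemResidue_pos (hn : 0 < n) (hm : 0 < m) (y : Item n m)
    (hy : 0 < itemResidue n m c y) :
    p1 n m c y ≤ Bval n m ^ 4 + Bval n m ^ 3 + 2 * n * Bval n m ^ 2 := by
  have hB := succ_lt_Bval hn hm
  set B := Bval n m
  have hv : (itemVar y : ℕ) + 1 ≤ n := (itemVar y).isLt
  have hnB : n * B + B ≤ n * B ^ 2 := by
    have : n + 1 ≤ n * B := by nlinarith
    calc n * B + B = (n + 1) * B := by ring
      _ ≤ n * B * B := by gcongr
      _ = n * B ^ 2 := by ring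
  calc p1 n m c y ≤ (B ^ 2 + n) * (B + 1) * B + B := by
        rw [p1_eq]; gcongr
        · exact itemBonus_le_one y hy
        · exact (itemResidue_le y).trans hB.le
    _ = B ^ 4 + B ^ 3 + n * B ^ 2 + (n * B + B) := by ring
    _ ≤ _ := by linarith

/-- Comparing `B⁴`-digits: `L` late payments exceed `2 L B⁴` by less than `B⁴`, while
`3R ≥ 3Nn (B⁴ + B³)`. -/
lemma le_of_three_mul_Rval_le (hn : 0 < n) (hm : 0 < m) {a L : ℕ}
    (hL : L ≤ 3 * m * (m + 1) * n)
    (h : 3 * Rval n m ≤ a * Bval n m ^ 4 + (Bval n m ^ 4 - 1)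
      + 2 * L * (Bval n m ^ 4 + Bval n m ^ 3 + 2 * n * Bval n m ^ 2)) :
    3 * Nval m * n ≤ a + 2 * L := by
  by_contra! hlt
  have hR := Rval_ge (n := n) (m := m)
  set B := Bval n m
  have hB4 : 1 ≤ B ^ 4 := Nat.one_le_pow _ _ (by have := six_mul_lt_Bval hn hm; omega)
  have hfour : (a + 2 * L + 1) * B ^ 4 ≤ 3 * Nval m * n * B ^ 4 := by gcongr; omega
  have hlow : 2 * L * (B ^ 3 + 2 * n * B ^ 2) ≤ 3 * Nval m * n * B ^ 3 := by
    have h12 : 2 * L * (2 * n) ≤ B := by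
      calc 2 * L * (2 * n) ≤ 2 * (3 * m * (m + 1) * n) * (2 * n) := by gcongr
        _ = 12 * m * (m + 1) * n ^ 2 := by ring
        _ ≤ B := twelve_mul_le_Bval
    calc 2 * L * (B ^ 3 + 2 * n * B ^ 2) = 2 * L * B ^ 3 + 2 * L * (2 * n) * B ^ 2 := by ring
      _ ≤ 2 * (3 * m * (m + 1) * n) * B ^ 3 + B * B ^ 2 := by gcongr
      _ = (2 * (3 * m * (m + 1) * n) + 1) * B ^ 3 := by ring
      _ ≤ 3 * Nval m * n * B ^ 3 := by gcongr; exact six_mul_add_one_le hn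
  have : a * B ^ 4 + (B ^ 4 - 1) + 1 = (a + 1) * B ^ 4 := by
    rw [add_assoc, Nat.sub_add_cancel hB4]; ring
  linarith

lemma sum_card_filter_lt {α : Type*} (s : Finset α) (f : α → ℕ) {M : ℕ}
    (hf : ∀ y ∈ s, f y ≤ M) : ∑ t ∈ range M, #(s.filter fun y => t < f y) = ∑ y ∈ s, f y := by
  simp only [card_filter]
  rw [sum_comm]
  refine sum_congr rfl fun y hy => ?_
  have : (range M).filter (· < f y) = range (f y) := by
    ext t; simp only [mem_filter, mem_range]; have := hf y hy; omega
  rw [sum_boole, Nat.cast_id, this, card_range]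

lemma eq_sub_of_sub_le_of_sum_le {f : ℕ → ℕ} {m : ℕ} (hle : ∀ t < m, m - t ≤ f t)
    (hsum : 2 * ∑ t ∈ range m, f t ≤ m * (m + 1)) : ∀ t < m, f t = m - t := by
  have hgauss : 2 * ∑ t ∈ range m, (m - t) = m * (m + 1) := by
    rw [← sum_range_reflect, mul_comm, ← sum_range_succ_mul_two m]
    congr 1
    exact sum_congr rfl fun t ht => by have := mem_range.1 ht; omega
  have hle' : ∀ t ∈ range m, m - t ≤ f t := fun t ht => hle t (mem_range.1 ht)
  have heq := (sum_eq_sum_iff_of_le hle').1 (le_antisymm (sum_le_sum hle') (by omega))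
  exact fun t ht => (heq t (mem_range.2 ht)).symm

variable {z : Item n m → Bool}

def paidUpTo (n m : ℕ) (c : Fin m → Fin 3 → Fin n × Bool) (z : Item n m → Bool) (d : ℕ) : ℕ :=
  ∑ y : Item n m,
    if (if z y then a2 n m c y else a1 y) ≤ d then (if z y then 2 * p1 n m c y else p1 n m c y)
    else 0

/-- The items of `X` still unpaid after day `n + 1 + t`, by `a2_eq`. -/
def lateSet (n m : ℕ) (c : Fin m → Fin 3 → Fin n × Bool) (z : Item n m → Bool) (t : ℕ) :
    Finset (Item n m) :=
  (Xset n m z).filter fun y => t < itemResidue n m c y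

lemma a1_le (y : Item n m) : a1 y ≤ n := (itemVar y).isLt

lemma paidUpTo_self : paidUpTo n m c z n = ∑ y ∈ (Xset n m z)ᶜ, p1 n m c y := by
  rw [Xset, compl_filter, sum_filter, paidUpTo]
  refine sum_congr rfl fun y _ => ?_
  cases z y
  · simp [a1_le y]
  · simp only [a2_eq, ↓reduceIte, not_true_eq_false]
    rw [if_neg (by omega)]

lemma paidUpTo_add_sum_lateSet (t : ℕ) :
    paidUpTo n m c z (n + 1 + t) + 2 * ∑ y ∈ lateSet n m c z t, p1 n m c y
      = ∑ y ∈ (Xset n m z)ᶜ, p1 n m c y + 2 * ∑ y ∈ Xset n m z, p1 n m c y := by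
  simp only [paidUpTo, lateSet, Xset, compl_filter, filter_filter, sum_filter, mul_sum,
    ← sum_add_distrib]
  refine sum_congr rfl fun y _ => ?_
  have := a1_le y
  cases z y
  · simp only [Bool.false_eq_true, ↓reduceIte, false_and, mul_zero, add_zero, not_false_eq_true,
      ite_eq_left_iff, not_le]
    omega
  · simp only [a2_eq, ↓reduceIte, true_and, not_true_eq_false]
    split_ifs <;> omega

lemma qv_self : qv n m n = Rval n m := by simp [qv]

lemma qv_succ : qv n m (n + 1) = (Nval m * n + 6 * m * n + 2 * n + m * (m + 1)) * Bval n m ^ 4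
    + (Bval n m ^ 4 - 1) := by simp [qv]

lemma qv_add_one_add {t : ℕ} (ht : 1 ≤ t) (htm : t ≤ m) :
    qv n m (n + 1 + t)
      = (3 * Nval m * n - 2 * (m + 1 - t)) * Bval n m ^ 4 + (Bval n m ^ 4 - 1) := by
  rw [qv, if_neg (by omega), if_neg (by omega), if_neg (by omega), if_pos (by omega)]
  congr 4; omega

lemma qv_of_lt {d : ℕ} (hd : n + m + 1 < d) : qv n m d = 3 * Rval n m := by
  rw [qv, if_neg (by omega), if_neg (by omega), if_neg (by omega), if_neg (by omega)]

lemma lateSet_eq_empty (t : ℕ) (ht : m + 1 ≤ t) : lateSet n m c z t = ∅ :=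
  filter_false_of_mem fun y _ => not_lt.2 ((itemResidue_le y).trans ht)

lemma sum_p1_Xset (hn : 0 < n) (hm : 0 < m) (hz : Feasible n m c z) :
    ∑ y ∈ Xset n m z, p1 n m c y = Rval n m ∧ ∑ y ∈ (Xset n m z)ᶜ, p1 n m c y = Rval n m := by
  have htotal := sum_add_sum_compl (Xset n m z) (p1 n m c)
  rw [sum_p1 hn hm] at htotal
  have hfirst : paidUpTo n m c z n ≤ qv n m n := hz n hn (by omega)
  have hlast : paidUpTo n m c z (n + 1 + (m + 1)) ≤ qv n m (n + 1 + (m + 1)) :=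
    hz _ (by omega) (by omega)
  have hall := paidUpTo_add_sum_lateSet (c := c) (z := z) (m + 1)
  rw [paidUpTo_self, qv_self] at hfirst
  rw [qv_of_lt (by omega)] at hlast
  rw [lateSet_eq_empty _ le_rfl, sum_empty] at hall
  omega

lemma sum_itemResidue_Xset (hn : 0 < n) (hm : 0 < m) (hz : Feasible n m c z) :
    ∑ y ∈ Xset n m z, itemResidue n m c y = 3 * m * (m + 1) * n := by
  have hlt : ∑ y ∈ Xset n m z, itemResidue n m c y < Bval n m :=
    (sum_le_sum_of_subset (subset_univ _)).trans_lt
      (sum_itemResidue (c := c) hn hm ▸ six_mul_lt_Bval hn hm)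
  have h := congrArg (· % Bval n m) (sum_p1_Xset hn hm hz).1
  simp only [sum_nat_mod, ← itemResidue_eq_p1_mod hn hm, Nat.mod_eq_of_lt hlt, Rval_mod hn hm] at h
  exact h

lemma three_mul_Rval_le (hn : 0 < n) (hm : 0 < m) (hz : Feasible n m c z) {t : ℕ} (ht : t ≤ m) :
    3 * Rval n m ≤ qv n m (n + 1 + t)
      + 2 * #(lateSet n m c z t) * (Bval n m ^ 4 + Bval n m ^ 3 + 2 * n * Bval n m ^ 2) := by
  have hday : paidUpTo n m c z (n + 1 + t) ≤ qv n m (n + 1 + t) := hz _ (by omega) (by omega)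
  have hlate : ∑ y ∈ lateSet n m c z t, p1 n m c y
      ≤ #(lateSet n m c z t) * (Bval n m ^ 4 + Bval n m ^ 3 + 2 * n * Bval n m ^ 2) := by
    simpa using sum_le_card_nsmul _ _ _ fun y hy =>
      p1_le_of_itemResidue_pos hn hm y (by simp only [lateSet, mem_filter] at hy; omega)
  have := paidUpTo_add_sum_lateSet (c := c) (z := z) t
  have := sum_p1_Xset hn hm hz
  linarith

lemma sum_card_lateSet (hn : 0 < n) (hm : 0 < m) (hz : Feasible n m c z) :
    ∑ t ∈ range (m + 1), #(lateSet n m c z t) = 3 * m * (m + 1) * n := by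
  rw [← sum_itemResidue_Xset hn hm hz]
  exact sum_card_filter_lt _ _ fun y _ => itemResidue_le y

lemma card_lateSet_le (hn : 0 < n) (hm : 0 < m) (hz : Feasible n m c z) {t : ℕ} (ht : t ≤ m) :
    #(lateSet n m c z t) ≤ 3 * m * (m + 1) * n :=
  sum_card_lateSet hn hm hz ▸ single_le_sum (f := fun t => #(lateSet n m c z t))
    (fun _ _ => Nat.zero_le _) (mem_range.2 (Nat.lt_succ_of_le ht))

lemma two_mul_sum_card_lateSet_succ_le (hn : 0 < n) (hm : 0 < m) (hz : Feasible n m c z) :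
    2 * ∑ t ∈ range m, #(lateSet n m c z (t + 1)) ≤ m * (m + 1) := by
  have hday := le_of_three_mul_Rval_le hn hm (card_lateSet_le hn hm hz (Nat.zero_le _))
    (by rw [← qv_succ]; exact three_mul_Rval_le hn hm hz (Nat.zero_le _))
  have hsum := sum_card_lateSet hn hm hz
  rw [sum_range_succ'] at hsum
  have := three_mul_Nval n m
  linarith

lemma sub_le_card_lateSet_succ (hn : 0 < n) (hm : 0 < m) (hz : Feasible n m c z) {t : ℕ}
    (ht : t < m) : m - t ≤ #(lateSet n m c z (t + 1)) := by
  have hday := le_of_three_mul_Rval_le hn hm (card_lateSet_le hn hm hz (t := t + 1) ht)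
    (by rw [← qv_add_one_add (t := t + 1) (by omega) (by omega)]
        exact three_mul_Rval_le hn hm hz (by omega))
  have hmn : m ≤ 3 * m * (m + 1) * n := by
    have : 1 ≤ 3 * (m + 1) * n := Nat.one_le_iff_ne_zero.2 (by positivity)
    nlinarith
  have := six_mul_add_one_le (m := m) hn
  omega

lemma card_lateSet_eq (hn : 0 < n) (hm : 0 < m) (hz : Feasible n m c z) {t : ℕ} (ht : 1 ≤ t)
    (htm : t ≤ m + 1) : #(lateSet n m c z t) = m + 1 - t := by
  rcases Nat.lt_or_ge t (m + 1) with h | h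
  · have := eq_sub_of_sub_le_of_sum_le (f := fun t => #(lateSet n m c z (t + 1)))
      (fun t ht => sub_le_card_lateSet_succ hn hm hz ht)
      (two_mul_sum_card_lateSet_succ_le hn hm hz) (t - 1) (by omega)
    rw [Nat.sub_add_cancel ht] at this
    omega
  · rw [lateSet_eq_empty _ h, card_empty]; omega

lemma Xset_inter_Zset (j : ℕ) :
    Xset n m z ∩ Zset n m c j = (Xset n m z).filter fun y => itemResidue n m c y = j := by
  ext y
  simp only [Xset, Zset, mem_inter, mem_filter, mem_univ, true_and, a2_eq, Nat.add_left_cancel_iff]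

lemma card_lateSet_pred {j : ℕ} (hj : 1 ≤ j) :
    #(lateSet n m c z (j - 1)) = #(Xset n m z ∩ Zset n m c j) + #(lateSet n m c z j) := by
  rw [Xset_inter_Zset, ← card_filter_add_card_filter_not (s := lateSet n m c z (j - 1))
    (fun y => itemResidue n m c y = j), lateSet, filter_filter, filter_filter, lateSet]
  congr 2 <;> exact filter_congr fun y _ => by omega

end Arrears

open Arrears in
theorem feasible_sol_one_in_three_general (n m : ℕ)
    (c : Fin m → Fin 3 → Fin n × Bool)
    (z : Item n m → Bool) (hz : Feasible n m c z) :
    ∀ j : ℕ, 2 ≤ j → j ≤ m + 1 → (Xset n m z ∩ Zset n m c j).card = 1 := by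
  intro j hj hjm
  have hm : 0 < m := by omega
  have hn : 0 < n := (c ⟨0, hm⟩ 0).1.pos
  have := card_lateSet_pred (c := c) (z := z) (j := j) (by omega)
  rw [card_lateSet_eq hn hm hz (by omega) (by omega),
    card_lateSet_eq hn hm hz (by omega) hjm] at this
  omega

/-- For every feasible solution of the constructed arrears instance `I′` and every
`j = 2, …, m+1`, exactly one item of `Z_j = {y : a_{y,2} = n+1+j}` lies in `X`; that is,
among the items corresponding to the three literals of clause `c_{j−1}`, exactly one is
in `X`. -/
theorem feasible_sol_one_in_three (n m : ℕ) (hn : 0 < n) (hm : 0 < m)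
    (c : Fin m → Fin 3 → Fin n × Bool)
    (z : Item n m → Bool) (hz : Feasible n m c z) :
    ∀ j : ℕ, 2 ≤ j → j ≤ m + 1 → (Xset n m z ∩ Zset n m c j).card = 1 :=
  feasible_sol_one_in_three_general n m c z hz
end
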